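/- arXiv:math/0703027 — 4 statements merged into one kernel-verified Lean document; each statement's English description precedes it below -/
import Mathlib

section
/- For all e₀, e₁ ∈ E and all measurable functions f: Ω_{e₁} → [0,∞], one has ∫_{Ω_{e₀}} f(g_{e₀,e₁}(x)) Φ_{v₀,a}(x) ρ_{e₀}(dx) = ∫_{Ω_{e₁}} f(x) Φ_{v₀,a}(x) ρ_{e₁}(dx); in other words, the image of the measure Φ_{v₀,a} dρ_{e₀} under g_{e₀,e₁} equals Φ_{v₀,a} dρ_{e₁}. As a consequence, the normalizing constant does not depend on the reference edge: z_{v₀,e₀} = z_{v₀,e₁}. -/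
open MeasureTheory
open scoped ENNReal Classical

namespace ERRWGraph

noncomputable section

variable {V : Type*} [Fintype V] [DecidableEq V]

/-- The measure `dx/x` on `(0,∞)`, i.e. Lebesgue measure on a logarithmic scale. -/
def logMeasure : Measure ℝ :=
  (volume.restrict (Set.Ioi (0 : ℝ))).withDensity fun x => ENNReal.ofReal (1 / x)

variable (G : SimpleGraph V) [Fintype G.edgeSet]

/-- The set `Ω_{e₀}` of strictly positive edge weights normalized at the reference
edge `e₀`. -/
def Omega (e₀ : G.edgeSet) : Set (G.edgeSet → ℝ) :=
  {x | (∀ e, 0 < x e) ∧ x e₀ = 1}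

/-- The reference measure `ρ_{e₀} = δ₁(dx_{e₀}) ∏_{e ≠ e₀} dx_e/x_e`, realized as a
measure on `(0,∞)^E ⊆ ℝ^E` concentrated on `Ω_{e₀}`. -/
def rho (e₀ : G.edgeSet) : Measure (G.edgeSet → ℝ) :=
  Measure.pi fun e => if e = e₀ then Measure.dirac 1 else logMeasure

/-- Vertex weight `x_v = ∑_{e ∋ v} x_e`. -/
def vwt (x : G.edgeSet → ℝ) (v : V) : ℝ :=
  ∑ e : G.edgeSet, if v ∈ (e : Sym2 V) then x e else 0

/-- Vertex weight `a_v = ∑_{e ∋ v} a_e` of the initial weights `a : Sym2 V → ℝ`. -/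
def avwt (a : Sym2 V → ℝ) (v : V) : ℝ :=
  ∑ e : G.edgeSet, if v ∈ (e : Sym2 V) then a (e : Sym2 V) else 0

/-- A set `T` of edges of `G` is a spanning tree iff the graph with edge set `T`
is a tree (i.e. a maximal connected acyclic subgraph of `G`). -/
def IsSpanningTree (T : Finset G.edgeSet) : Prop :=
  (SimpleGraph.fromEdgeSet (Subtype.val '' (T : Set G.edgeSet))).IsTree

/-- `∑_{T ∈ 𝒯} ∏_{e ∈ T} x_e`, the sum over spanning trees of `G`. -/
def treeSum (x : G.edgeSet → ℝ) : ℝ :=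
  ∑ T : Finset G.edgeSet, if IsSpanningTree G T then (∏ e ∈ T, x e) else 0

/-- The function `Φ_{v₀,a}` from the Coppersmith–Diaconis description of the
mixing measure. -/
def Phi (a : Sym2 V → ℝ) (v₀ : V) (x : G.edgeSet → ℝ) : ℝ :=
  (∏ e : G.edgeSet, x e ^ a (e : Sym2 V)) * vwt G x v₀ ^ (-avwt G a v₀ / 2) *
    (∏ v ∈ Finset.univ.erase v₀, vwt G x v ^ (-(avwt G a v + 1) / 2)) *
    Real.sqrt (treeSum G x)

/-- The normalizing constant `z_{v₀,e₀} = ∫ Φ_{v₀,a} dρ_{e₀}`. -/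
def z (a : Sym2 V → ℝ) (v₀ : V) (e₀ : G.edgeSet) : ℝ≥0∞ :=
  ∫⁻ x, ENNReal.ofReal (Phi G a v₀ x) ∂rho G e₀

/-- The mixing measure `ℚ_{v₀,e₀}`, with density `Φ_{v₀,a}/z_{v₀,e₀}` w.r.t. `ρ_{e₀}`. -/
def Qm (a : Sym2 V → ℝ) (v₀ : V) (e₀ : G.edgeSet) : Measure (G.edgeSet → ℝ) :=
  (z G a v₀ e₀)⁻¹ • (rho G e₀).withDensity fun x => ENNReal.ofReal (Phi G a v₀ x)

/-- The density `((Φ_{v₀,a}/z_{v₀,e₀})·(Φ_{v₁,a}/z_{v₁,e₀}))^{1/2}` of the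
interpolated measure. -/
def interpDens (a : Sym2 V → ℝ) (v₀ v₁ : V) (e₀ : G.edgeSet) (x : G.edgeSet → ℝ) : ℝ≥0∞ :=
  (ENNReal.ofReal (Phi G a v₀ x) / z G a v₀ e₀ *
    (ENNReal.ofReal (Phi G a v₁ x) / z G a v₁ e₀)) ^ (1 / 2 : ℝ)

/-- The normalizing constant `Z_{v₀,v₁,e₀}` of the interpolated measure. -/
def Zc (a : Sym2 V → ℝ) (v₀ v₁ : V) (e₀ : G.edgeSet) : ℝ≥0∞ :=
  ∫⁻ x, interpDens G a v₀ v₁ e₀ x ∂rho G e₀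

/-- The interpolated measure `ℙ_{v₀,v₁,e₀}`. -/
def Pm (a : Sym2 V → ℝ) (v₀ v₁ : V) (e₀ : G.edgeSet) : Measure (G.edgeSet → ℝ) :=
  (Zc G a v₀ v₁ e₀)⁻¹ • (rho G e₀).withDensity (interpDens G a v₀ v₁ e₀)

/-- `f` is an automorphism of the weighted graph `(G,a)`. -/
def IsAut (a : Sym2 V → ℝ) (f : V → V) : Prop :=
  Function.Bijective f ∧ (∀ u v : V, G.Adj (f u) (f v) ↔ G.Adj u v) ∧
    ∀ u v : V, G.Adj u v → a s(f u, f v) = a s(u, v)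

/-- Assumption 2.3 of the paper. -/
def Assumption23 (a φ : Sym2 V → ℝ) (v₀ v₁ : V) (e₀ : G.edgeSet) : Prop :=
  v₀ ≠ v₁ ∧ ¬G.Adj v₀ v₁ ∧ v₀ ∈ (e₀ : Sym2 V) ∧
    (∃ f : V → V, IsAut G a f ∧ f v₀ = v₁ ∧ f v₁ = v₀) ∧
    (∀ e : G.edgeSet, φ (e : Sym2 V) ∈ Set.Icc (0 : ℝ) 1) ∧
    (∀ e : G.edgeSet, v₀ ∈ (e : Sym2 V) → φ (e : Sym2 V) = 0) ∧
    (∀ e : G.edgeSet, v₁ ∈ (e : Sym2 V) → φ (e : Sym2 V) = 1)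

/-- `max_{e,e' ∋ v} (φ(e) - φ(e'))²`. -/
def maxsq (φ : Sym2 V → ℝ) (v : V) : ℝ :=
  sSup ((fun p : G.edgeSet × G.edgeSet =>
      (φ (p.1 : Sym2 V) - φ (p.2 : Sym2 V)) ^ 2) ''
    {p : G.edgeSet × G.edgeSet | v ∈ (p.1 : Sym2 V) ∧ v ∈ (p.2 : Sym2 V)})

/-- The "Dirichlet form" `S_φ`. -/
def Sphi (a φ : Sym2 V → ℝ) : ℝ :=
  ∑ v : V, (avwt G a v + 1) / 2 * maxsq G φ v

/-- `H_{v₀,v₁}(x) = (1/4) log (x_{v₁}/x_{v₀})`. -/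
def Hfun (v₀ v₁ : V) (x : G.edgeSet → ℝ) : ℝ :=
  (1 / 4) * Real.log (vwt G x v₁ / vwt G x v₀)

/-- `log (dQ/dP)` realized via the Radon–Nikodym derivative. -/
def logRN {α : Type*} [MeasurableSpace α] (Q P : Measure α) (x : α) : ℝ :=
  Real.log ((Q.rnDeriv P x).toReal)

/-- The deformation map `Ξ^{γφ}(x) = (e^{γφ(e)} x_e)_{e∈E}`. -/
def Xi (φ : Sym2 V → ℝ) (γ : ℝ) (x : G.edgeSet → ℝ) : G.edgeSet → ℝ :=
  fun e => Real.exp (γ * φ (e : Sym2 V)) * x e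

/-- `Π^{γφ}`, the image of `ℙ_{v₀,v₁,e₀}` under `Ξ^{γφ}`. -/
def PiGamma (a φ : Sym2 V → ℝ) (v₀ v₁ : V) (e₀ : G.edgeSet) (γ : ℝ) :
    Measure (G.edgeSet → ℝ) :=
  Measure.map (Xi G φ γ) (Pm G a v₀ v₁ e₀)

/-- The explicit realization `f_γ` of `log(dΠ^{γφ}/dℙ_{v₀,v₁,e₀}) ∘ Ξ^{γφ}`. -/
def fgamma (a φ : Sym2 V → ℝ) (v₀ v₁ : V) (γ : ℝ) (x : G.edgeSet → ℝ) : ℝ :=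
  γ * (avwt G a v₁ / 2 + 1 / 4) -
    γ * ∑ e : G.edgeSet, φ (e : Sym2 V) * a (e : Sym2 V) +
    (∑ v ∈ Finset.univ \ {v₀, v₁}, (avwt G a v + 1) / 2 *
      Real.log (vwt G (Xi G φ γ x) v / vwt G x v)) -
    (1 / 2) * Real.log (treeSum G (Xi G φ γ x) / treeSum G x)

/-- Mean of `φ` under the measure `μ_{x,v,γ}` on the edges incident to `v`. -/
def muMean (φ : Sym2 V → ℝ) (γ : ℝ) (x : G.edgeSet → ℝ) (v : V) : ℝ :=
  (∑ e : G.edgeSet, if v ∈ (e : Sym2 V) then φ (e : Sym2 V) * Xi G φ γ x e else 0) /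
    vwt G (Xi G φ γ x) v

/-- Variance of `φ` under `μ_{x,v,γ}`. -/
def muVar (φ : Sym2 V → ℝ) (γ : ℝ) (x : G.edgeSet → ℝ) (v : V) : ℝ :=
  (∑ e : G.edgeSet, if v ∈ (e : Sym2 V) then
      (φ (e : Sym2 V) - muMean G φ γ x v) ^ 2 * Xi G φ γ x e else 0) /
    vwt G (Xi G φ γ x) v

/-- `Δ(T) = ∑_{e ∈ T} φ(e)`. -/
def Delta (φ : Sym2 V → ℝ) (T : Finset G.edgeSet) : ℝ := ∑ e ∈ T, φ (e : Sym2 V)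

/-- Mean of `Δ` under the measure `ν_{x,γ}` on spanning trees. -/
def nuMean (φ : Sym2 V → ℝ) (γ : ℝ) (x : G.edgeSet → ℝ) : ℝ :=
  (∑ T : Finset G.edgeSet, if IsSpanningTree G T then
      Delta G φ T * ∏ e ∈ T, Xi G φ γ x e else 0) /
    treeSum G (Xi G φ γ x)

/-- Variance of `Δ` under `ν_{x,γ}`. -/
def nuVar (φ : Sym2 V → ℝ) (γ : ℝ) (x : G.edgeSet → ℝ) : ℝ :=
  (∑ T : Finset G.edgeSet, if IsSpanningTree G T then
      (Delta G φ T - nuMean G φ γ x) ^ 2 * ∏ e ∈ T, Xi G φ γ x e else 0) /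
    treeSum G (Xi G φ γ x)

/-- The claimed first derivative of `γ ↦ f_γ(x)`. -/
def fder1 (a φ : Sym2 V → ℝ) (v₀ v₁ : V) (x : G.edgeSet → ℝ) (γ : ℝ) : ℝ :=
  avwt G a v₁ / 2 + 1 / 4 - (∑ e : G.edgeSet, φ (e : Sym2 V) * a (e : Sym2 V)) +
    (∑ v ∈ Finset.univ \ {v₀, v₁}, (avwt G a v + 1) / 2 * muMean G φ γ x v) -
    (1 / 2) * nuMean G φ γ x

/-- The claimed second derivative of `γ ↦ f_γ(x)`. -/
def fder2 (a φ : Sym2 V → ℝ) (v₀ v₁ : V) (x : G.edgeSet → ℝ) (γ : ℝ) : ℝ :=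
  (∑ v ∈ Finset.univ \ {v₀, v₁}, (avwt G a v + 1) / 2 * muVar G φ γ x v) -
    (1 / 2) * nuVar G φ γ x

/-- Membership in the class `𝒫` of the variational principle. -/
def VarP (a : Sym2 V → ℝ) (v₀ v₁ : V) (e₀ : G.edgeSet)
    (Q : Measure (G.edgeSet → ℝ)) : Prop :=
  IsProbabilityMeasure Q ∧ Q ≪ Pm G a v₀ v₁ e₀ ∧ Pm G a v₀ v₁ e₀ ≪ Q ∧
    Integrable (Hfun G v₀ v₁) Q ∧ Integrable (logRN Q (Pm G a v₀ v₁ e₀)) Q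

/-- The functional `F(Π) = E_Π[H] + E_Π[log(dΠ/dℙ_{v₀,v₁,e₀})]`. -/
def Ffun (a : Sym2 V → ℝ) (v₀ v₁ : V) (e₀ : G.edgeSet)
    (Q : Measure (G.edgeSet → ℝ)) : ℝ :=
  (∫ x, Hfun G v₀ v₁ x ∂Q) + ∫ x, logRN Q (Pm G a v₀ v₁ e₀) x ∂Q

end

end ERRWGraph

section AuxProof
open ERRWGraph

instance : SigmaFinite ERRWGraph.logMeasure := by unfold ERRWGraph.logMeasure; infer_instance

theorem logMeasure_eq : logMeasure = Measure.map Real.exp volume := by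
  symm
  ext s hs
  have key := lintegral_image_eq_lintegral_abs_det_fderiv_mul volume
    (f' := fun x => ContinuousLinearMap.smulRight (1 : ℝ →L[ℝ] ℝ) (Real.exp x))
    (Real.measurable_exp hs)
    (fun x _ => (Real.hasDerivAt_exp x).hasFDerivAt.hasFDerivWithinAt)
    (Real.exp_injective.injOn) (fun x => ENNReal.ofReal (1/x))
  rw [Set.image_preimage_eq_inter_range, Real.range_exp] at key
  rw [Measure.map_apply Real.measurable_exp hs, logMeasure,
    withDensity_apply _ hs, Measure.restrict_restrict hs, key]
  simp only [ContinuousLinearMap.smulRight_one_eq_toSpanSingleton, ContinuousLinearMap.det_toSpanSingleton, abs_of_pos (Real.exp_pos _), one_div,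
    ← ENNReal.ofReal_mul (Real.exp_pos _).le, mul_inv_cancel₀ (Real.exp_ne_zero _),
    ENNReal.ofReal_one]
  rw [setLIntegral_one]

theorem map_mul_logMeasure {c : ℝ} (hc : 0 < c) :
    Measure.map (fun t => c * t) logMeasure = logMeasure := by
  rw [logMeasure_eq, Measure.map_map (by fun_prop) Real.measurable_exp]
  have : ((fun t => c * t) ∘ Real.exp) = Real.exp ∘ (fun t => t + Real.log c) := by
    funext t; simp [Real.exp_add, Real.exp_log hc, mul_comm]
  rw [this, ← Measure.map_map Real.measurable_exp (by fun_prop), map_add_right_eq_self]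

theorem map_inv_logMeasure :
    Measure.map (fun t : ℝ => t⁻¹) logMeasure = logMeasure := by
  rw [logMeasure_eq, Measure.map_map measurable_inv Real.measurable_exp]
  have : ((fun t : ℝ => t⁻¹) ∘ Real.exp) = Real.exp ∘ (fun t : ℝ => -t) := by
    funext t; simp [Real.exp_neg]
  rw [this, ← Measure.map_map Real.measurable_exp measurable_neg]
  congr 1
  exact Measure.map_neg_eq_self volume

theorem logMeasure_nonpos : logMeasure {t : ℝ | ¬ 0 < t} = 0 := by
  have hset : {t : ℝ | ¬ 0 < t} = Set.Iic 0 := by ext t; simp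
  rw [hset]
  have h : (volume.restrict (Set.Ioi (0:ℝ))) (Set.Iic 0) = 0 := by
    rw [Measure.restrict_apply measurableSet_Iic, Set.Iic_inter_Ioi]
    simp
  exact withDensity_absolutelyContinuous _ _ h

theorem lmarginal_family_congr {ι : Type*} [DecidableEq ι] (μ ν : ι → Measure ℝ)
    (f : (ι → ℝ) → ℝ≥0∞) (s : Finset ι) (h : ∀ i ∈ s, μ i = ν i) :
    MeasureTheory.lmarginal μ s f = MeasureTheory.lmarginal ν s f := by
  have : (fun i : s => μ i) = fun i : s => ν i := funext fun i => h i i.2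
  unfold MeasureTheory.lmarginal
  rw [this]

theorem dirac_compl_one : Measure.dirac (1:ℝ) {t : ℝ | t ≠ 1} = 0 := by
  have hset : {t : ℝ | t ≠ 1} = ({1} : Set ℝ)ᶜ := by ext t; simp
  rw [hset, Measure.dirac_apply' _ (measurableSet_singleton (1:ℝ)).compl]
  simp

theorem pi_ae_pos {ι : Type*} [Fintype ι] (e₀ : ι) (μ₀ : ι → Measure ℝ)
    [∀ e, SigmaFinite (μ₀ e)]
    (h0 : μ₀ e₀ = Measure.dirac 1) (h : ∀ e, e ≠ e₀ → μ₀ e = logMeasure) :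
    ∀ᵐ x ∂(Measure.pi μ₀), ∀ e, 0 < x e := by
  rw [ae_all_iff]
  intro e
  rw [ae_iff]
  have hpre : {x : ι → ℝ | ¬ 0 < x e} = Function.eval e ⁻¹' (Set.Iic 0) := by
    ext x; simp [not_lt]
  rw [hpre]
  refine Measure.pi_eval_preimage_null _ ?_
  by_cases he : e = e₀
  · rw [he, h0, Measure.dirac_apply' _ measurableSet_Iic]
    simp
  · rw [h e he]
    have : Set.Iic (0:ℝ) = {t : ℝ | ¬ 0 < t} := by ext t; simp [not_lt]
    rw [this]
    exact logMeasure_nonpos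

theorem pi_ae_eq_one {ι : Type*} [Fintype ι] (e₀ : ι) (μ₀ : ι → Measure ℝ)
    [∀ e, SigmaFinite (μ₀ e)] (h0 : μ₀ e₀ = Measure.dirac 1) :
    ∀ᵐ x ∂(Measure.pi μ₀), x e₀ = 1 := by
  rw [ae_iff]
  have hpre : {x : ι → ℝ | ¬ x e₀ = 1} = Function.eval e₀ ⁻¹' {t : ℝ | t ≠ 1} := rfl
  rw [hpre]
  exact Measure.pi_eval_preimage_null _ (by rw [h0]; exact dirac_compl_one)

theorem pi_div_map {ι : Type*} [Fintype ι] [DecidableEq ι] (e₀ e₁ : ι)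
    (μ₀ μ₁ : ι → Measure ℝ)
    (h00 : μ₀ e₀ = Measure.dirac 1) (h0 : ∀ e, e ≠ e₀ → μ₀ e = logMeasure)
    (h11 : μ₁ e₁ = Measure.dirac 1) (h1 : ∀ e, e ≠ e₁ → μ₁ e = logMeasure)
    (F : (ι → ℝ) → ℝ≥0∞) (hF : Measurable F) :
    ∫⁻ x, F (fun e => x e / x e₁) ∂(Measure.pi μ₀) = ∫⁻ x, F x ∂(Measure.pi μ₁) := by
  haveI : ∀ e, SigmaFinite (μ₀ e) := fun e => by
    by_cases h : e = e₀
    · rw [h, h00]; infer_instance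
    · rw [h0 e h]; infer_instance
  haveI : ∀ e, SigmaFinite (μ₁ e) := fun e => by
    by_cases h : e = e₁
    · rw [h, h11]; infer_instance
    · rw [h1 e h]; infer_instance
  by_cases h01 : e₀ = e₁
  · subst h01
    have hμ : μ₀ = μ₁ := by
      funext e
      by_cases h : e = e₀
      · rw [h, h00, h11]
      · rw [h0 e h, h1 e h]
    rw [hμ]
    refine lintegral_congr_ae ?_
    filter_upwards [pi_ae_eq_one e₀ μ₁ h11] with x hx
    have : (fun e => x e / x e₀) = x := by funext e; rw [hx, div_one]
    rw [this]
  · have hg : Measurable fun x : ι → ℝ => (fun e => x e / x e₁) :=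
      measurable_pi_lambda _ fun e => (measurable_pi_apply e).div (measurable_pi_apply e₁)
    set Fg : (ι → ℝ) → ℝ≥0∞ := fun x => F (fun e => x e / x e₁) with hFgdef
    have hFg : Measurable Fg := hF.comp hg
    set ν : ι → Measure ℝ := fun _ => logMeasure with hν
    set p : ι → ℝ := fun _ => 1 with hp
    set s : Finset ι := (Finset.univ.erase e₀).erase e₁ with hs
    have he₁s : e₁ ∉ s := Finset.notMem_erase e₁ _
    have he₀s : e₀ ∉ s := fun h => Finset.notMem_erase e₀ _ (Finset.mem_of_mem_erase h)
    have hM : Measurable (MeasureTheory.lmarginal ν s F) := Measurable.lmarginal ν hF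
    -- LHS
    have hA : ∫⁻ x, Fg x ∂Measure.pi μ₀ =
        ∫⁻ t, (MeasureTheory.lmarginal ν s Fg)
          (Function.update (Function.update p e₀ 1) e₁ t) ∂logMeasure := by
      rw [MeasureTheory.lintegral_eq_lmarginal_univ p,
        MeasureTheory.lmarginal_erase _ hFg (Finset.mem_univ e₀) p, h00]
      have hmeas : Measurable fun xᵢ : ℝ =>
          (MeasureTheory.lmarginal μ₀ (Finset.univ.erase e₀) Fg) (Function.update p e₀ xᵢ) :=
        (Measurable.lmarginal μ₀ hFg).comp (measurable_update p)
      rw [lintegral_dirac' _ hmeas,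
        lmarginal_family_congr μ₀ ν Fg (Finset.univ.erase e₀)
          (fun i hi => h0 i (Finset.ne_of_mem_erase hi)),
        MeasureTheory.lmarginal_erase _ hFg
          (Finset.mem_erase.mpr ⟨fun h => h01 h.symm, Finset.mem_univ e₁⟩)]
    have hB : ∫⁻ x, F x ∂Measure.pi μ₁ =
        ∫⁻ t, (MeasureTheory.lmarginal ν s F)
          (Function.update (Function.update p e₁ 1) e₀ t) ∂logMeasure := by
      rw [MeasureTheory.lintegral_eq_lmarginal_univ p,
        MeasureTheory.lmarginal_erase _ hF (Finset.mem_univ e₁) p, h11]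
      have hmeas : Measurable fun xᵢ : ℝ =>
          (MeasureTheory.lmarginal μ₁ (Finset.univ.erase e₁) F) (Function.update p e₁ xᵢ) :=
        (Measurable.lmarginal μ₁ hF).comp (measurable_update p)
      rw [lintegral_dirac' _ hmeas,
        lmarginal_family_congr μ₁ ν F (Finset.univ.erase e₁)
          (fun i hi => h1 i (Finset.ne_of_mem_erase hi)),
        MeasureTheory.lmarginal_erase _ hF
          (Finset.mem_erase.mpr ⟨h01, Finset.mem_univ e₀⟩)]
      have hss : (Finset.univ.erase e₁).erase e₀ = s := by
        rw [hs]; ext i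
        simp only [Finset.mem_erase, Finset.mem_univ, and_true]
        tauto
      rw [hss]
    rw [hA, hB]
    -- key pointwise identity
    have key : ∀ t : ℝ, 0 < t →
        (MeasureTheory.lmarginal ν s Fg) (Function.update (Function.update p e₀ 1) e₁ t) =
        (MeasureTheory.lmarginal ν s F)
          (Function.update (Function.update p e₁ 1) e₀ t⁻¹) := by
      intro t ht
      have hsub : MeasurePreserving (fun (y : (i : s) → ℝ) => fun i => t⁻¹ * y i)
          (Measure.pi fun _ => logMeasure) (Measure.pi fun _ => logMeasure) :=
        measurePreserving_pi _ _ (fun _ =>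
          ⟨by fun_prop, map_mul_logMeasure (inv_pos.mpr ht)⟩)
      have hpoint : ∀ y : (i : s) → ℝ,
          Fg (Function.updateFinset (Function.update (Function.update p e₀ 1) e₁ t) s y) =
          F (Function.updateFinset (Function.update (Function.update p e₁ 1) e₀ t⁻¹) s
            (fun i => t⁻¹ * y i)) := by
        intro y
        simp only [hFgdef]
        congr 1
        funext e
        simp only [Function.updateFinset]
        rw [dif_neg he₁s]
        have he₁v : Function.update (Function.update p e₀ 1) e₁ t e₁ = t :=
          Function.update_self _ _ _
        rw [he₁v]
        by_cases hes : e ∈ s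
        · rw [dif_pos hes, dif_pos hes, div_eq_inv_mul]
        · rw [dif_neg hes, dif_neg hes]
          have : e = e₀ ∨ e = e₁ := by
            by_contra hc
            push_neg at hc
            exact hes (Finset.mem_erase.mpr ⟨hc.2, Finset.mem_erase.mpr ⟨hc.1, Finset.mem_univ e⟩⟩)
          rcases this with rfl | rfl
          · rw [Function.update_of_ne h01, Function.update_self,
              Function.update_self, div_eq_inv_mul, mul_one]
          · rw [Function.update_self, Function.update_of_ne (fun h => h01 h.symm),
              Function.update_self, div_self (ne_of_gt ht)]
      unfold MeasureTheory.lmarginal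
      calc ∫⁻ y : (i : s) → ℝ,
            Fg (Function.updateFinset (Function.update (Function.update p e₀ 1) e₁ t) s y)
              ∂Measure.pi (fun _ : s => logMeasure)
          = ∫⁻ y : (i : s) → ℝ,
            F (Function.updateFinset (Function.update (Function.update p e₁ 1) e₀ t⁻¹) s
              (fun i => t⁻¹ * y i)) ∂Measure.pi (fun _ : s => logMeasure) :=
            lintegral_congr hpoint
        _ = ∫⁻ y : (i : s) → ℝ,
            F (Function.updateFinset (Function.update (Function.update p e₁ 1) e₀ t⁻¹) s y)
              ∂Measure.pi (fun _ : s => logMeasure) :=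
            hsub.lintegral_comp (hF.comp measurable_updateFinset)
    have hae : ∀ᵐ t ∂logMeasure, 0 < t := by
      rw [ae_iff]; exact logMeasure_nonpos
    rw [lintegral_congr_ae (by filter_upwards [hae] with t ht using key t ht)]
    have hΦ : Measurable fun u : ℝ =>
        (MeasureTheory.lmarginal ν s F) (Function.update (Function.update p e₁ 1) e₀ u) :=
      hM.comp (measurable_update _)
    have hmi := lintegral_map (μ := logMeasure) hΦ (measurable_inv : Measurable fun t : ℝ => t⁻¹)
    rw [map_inv_logMeasure] at hmi
    exact hmi.symm

theorem aux_rpow_sum {ι : Type*} {c : ℝ} (hc : 0 < c) (s : Finset ι) (f : ι → ℝ) :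
    c ^ (∑ i ∈ s, f i) = ∏ i ∈ s, c ^ f i := by
  classical
  induction s using Finset.cons_induction with
  | empty => simp
  | cons i s hi ih => rw [Finset.sum_cons, Finset.prod_cons, Real.rpow_add hc, ih]

theorem aux_sum_mem_edge {V : Type*} [Fintype V] [DecidableEq V] (G : SimpleGraph V)
    (e : Sym2 V) (he : e ∈ G.edgeSet) (r : ℝ) :
    ∑ v : V, (if v ∈ e then r else 0) = 2 * r := by
  induction e using Sym2.ind with
  | _ u w =>
    rw [SimpleGraph.mem_edgeSet] at he
    have hne : u ≠ w := he.ne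
    have hterm : ∀ v : V, (if v ∈ (s(u, w) : Sym2 V) then r else 0)
        = (if v = u then r else 0) + (if v = w then r else 0) := by
      intro v
      by_cases h1 : v = u
      · subst h1; rw [if_pos (by simp), if_pos rfl, if_neg hne]; ring
      · by_cases h2 : v = w
        · subst h2; rw [if_pos (by simp), if_neg h1, if_pos rfl]; ring
        · rw [if_neg (by simp [Sym2.mem_iff, h1, h2]), if_neg h1, if_neg h2]; ring
    rw [Finset.sum_congr rfl fun v _ => hterm v, Finset.sum_add_distrib,
      Finset.sum_ite_eq' Finset.univ u fun _ => r,
      Finset.sum_ite_eq' Finset.univ w fun _ => r]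
    simp only [Finset.mem_univ, if_pos]
    ring

theorem aux_card_spanning {V : Type*} [Fintype V] [DecidableEq V] (G : SimpleGraph V)
    [Fintype G.edgeSet] {T : Finset G.edgeSet} (h : ERRWGraph.IsSpanningTree G T) :
    T.card = Fintype.card V - 1 := by
  classical
  have hE : (SimpleGraph.fromEdgeSet (Subtype.val '' (T : Set G.edgeSet))).edgeSet
      = Subtype.val '' (T : Set G.edgeSet) := by
    rw [SimpleGraph.edgeSet_fromEdgeSet]
    ext e
    simp only [Set.mem_diff, Set.mem_setOf_eq, and_iff_left_iff_imp]
    rintro ⟨e', _, rfl⟩ hd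
    exact G.not_isDiag_of_mem_edgeSet e'.2 hd
  haveI : Fintype (SimpleGraph.fromEdgeSet (Subtype.val '' (T : Set G.edgeSet))).edgeSet :=
    Fintype.ofFinite _
  have hcard := SimpleGraph.IsTree.card_edgeFinset h
  have himg : (SimpleGraph.fromEdgeSet (Subtype.val '' (T : Set G.edgeSet))).edgeFinset
      = T.image Subtype.val := by
    ext e
    rw [SimpleGraph.mem_edgeFinset, hE]
    simp [Set.mem_image, Finset.mem_image]
  rw [himg, Finset.card_image_of_injective _ Subtype.val_injective] at hcard
  omega

theorem aux_measurable_Phi {V : Type*} [Fintype V] [DecidableEq V] (G : SimpleGraph V)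
    [Fintype G.edgeSet] (a : Sym2 V → ℝ) (v₀ : V) :
    Measurable (ERRWGraph.Phi G a v₀) := by
  have hvwt : ∀ v : V, Measurable fun x : G.edgeSet → ℝ => ERRWGraph.vwt G x v := by
    intro v
    unfold ERRWGraph.vwt
    refine Finset.measurable_sum _ fun e _ => ?_
    by_cases hve : v ∈ (e : Sym2 V)
    · simp only [if_pos hve]; exact measurable_pi_apply e
    · simp only [if_neg hve]; exact measurable_const
  have htree : Measurable (ERRWGraph.treeSum G) := by
    unfold ERRWGraph.treeSum
    refine Finset.measurable_sum _ fun T _ => ?_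
    by_cases hT : ERRWGraph.IsSpanningTree G T
    · simp only [if_pos hT]; exact Finset.measurable_prod _ fun e _ => measurable_pi_apply e
    · simp only [if_neg hT]; exact measurable_const
  unfold ERRWGraph.Phi
  refine (((Finset.measurable_prod _ fun e _ => ?_).mul ?_).mul ?_).mul ?_
  · exact ((by fun_prop : Measurable fun t : ℝ => t ^ a (e : Sym2 V))).comp
      (measurable_pi_apply e)
  · exact ((by fun_prop : Measurable fun t : ℝ =>
      t ^ (-ERRWGraph.avwt G a v₀ / 2))).comp (hvwt v₀)
  · refine Finset.measurable_prod _ fun v _ => ?_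
    exact ((by fun_prop : Measurable fun t : ℝ =>
      t ^ (-(ERRWGraph.avwt G a v + 1) / 2))).comp (hvwt v)
  · exact Real.continuous_sqrt.measurable.comp htree

theorem aux_Phi_smul {V : Type*} [Fintype V] [DecidableEq V] (G : SimpleGraph V)
    [Fintype G.edgeSet] (a : Sym2 V → ℝ) (v₀ : V) (x : G.edgeSet → ℝ)
    (hx : ∀ e, 0 < x e) {c : ℝ} (hc : 0 < c) :
    ERRWGraph.Phi G a v₀ (fun e => c * x e) = ERRWGraph.Phi G a v₀ x := by
  have hvnn : ∀ v, 0 ≤ ERRWGraph.vwt G x v := by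
    intro v
    refine Finset.sum_nonneg fun e _ => ?_
    by_cases hve : v ∈ (e : Sym2 V)
    · simp only [if_pos hve]; exact (hx e).le
    · simp only [if_neg hve]; exact le_refl _
  have hvc : ∀ v, ERRWGraph.vwt G (fun e => c * x e) v = c * ERRWGraph.vwt G x v := by
    intro v
    unfold ERRWGraph.vwt
    rw [Finset.mul_sum]
    refine Finset.sum_congr rfl fun e _ => ?_
    by_cases hve : v ∈ (e : Sym2 V)
    · simp only [if_pos hve]
    · simp only [if_neg hve, mul_zero]
  have htreec : ERRWGraph.treeSum G (fun e => c * x e)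
      = c ^ (Fintype.card V - 1) * ERRWGraph.treeSum G x := by
    unfold ERRWGraph.treeSum
    rw [Finset.mul_sum]
    refine Finset.sum_congr rfl fun T _ => ?_
    by_cases hT : ERRWGraph.IsSpanningTree G T
    · rw [if_pos hT, if_pos hT, Finset.prod_mul_distrib, Finset.prod_const,
        aux_card_spanning G hT]
    · rw [if_neg hT, if_neg hT, mul_zero]
  have hsum : (∑ e : G.edgeSet, a (e : Sym2 V)) + (-ERRWGraph.avwt G a v₀ / 2) +
      (∑ v ∈ Finset.univ.erase v₀, (-(ERRWGraph.avwt G a v + 1) / 2)) +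
      ((Fintype.card V - 1 : ℕ) : ℝ) / 2 = 0 := by
    have hdouble : ∑ v : V, ERRWGraph.avwt G a v = 2 * ∑ e : G.edgeSet, a (e : Sym2 V) := by
      unfold ERRWGraph.avwt
      have hinner : ∀ e : G.edgeSet,
          (∑ v : V, if v ∈ (e : Sym2 V) then a (e : Sym2 V) else 0) = 2 * a (e : Sym2 V) :=
        fun e => aux_sum_mem_edge G _ e.2 _
      rw [Finset.sum_comm, Finset.sum_congr rfl fun e _ => hinner e, ← Finset.mul_sum]
    have hsplit : ERRWGraph.avwt G a v₀ + ∑ v ∈ Finset.univ.erase v₀, ERRWGraph.avwt G a v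
        = ∑ v : V, ERRWGraph.avwt G a v := Finset.add_sum_erase _ _ (Finset.mem_univ v₀)
    have hconst : ∑ v ∈ Finset.univ.erase v₀, (-(ERRWGraph.avwt G a v + 1) / 2)
        = -(∑ v ∈ Finset.univ.erase v₀, ERRWGraph.avwt G a v) / 2
          - ((Fintype.card V - 1 : ℕ) : ℝ) / 2 := by
      have hterm : ∀ v ∈ Finset.univ.erase v₀, (-(ERRWGraph.avwt G a v + 1) / 2)
          = (-(1:ℝ)/2) * ERRWGraph.avwt G a v + (-(1:ℝ)/2) := fun v _ => by ring
      rw [Finset.sum_congr rfl hterm, Finset.sum_add_distrib, ← Finset.mul_sum,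
        Finset.sum_const, Finset.card_erase_of_mem (Finset.mem_univ v₀),
        Finset.card_univ, nsmul_eq_mul]
      ring
    rw [hconst]
    linarith
  unfold ERRWGraph.Phi
  beta_reduce
  simp only [hvc, htreec]
  rw [Real.sqrt_mul (by positivity) (ERRWGraph.treeSum G x)]
  have h1 : (∏ e : G.edgeSet, (c * x e) ^ a (e : Sym2 V))
      = c ^ (∑ e : G.edgeSet, a (e : Sym2 V)) * ∏ e : G.edgeSet, x e ^ a (e : Sym2 V) := by
    rw [aux_rpow_sum hc, ← Finset.prod_mul_distrib]
    exact Finset.prod_congr rfl fun e _ => Real.mul_rpow hc.le (hx e).le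
  have h2 : (c * ERRWGraph.vwt G x v₀) ^ (-ERRWGraph.avwt G a v₀ / 2)
      = c ^ (-ERRWGraph.avwt G a v₀ / 2) * ERRWGraph.vwt G x v₀ ^ (-ERRWGraph.avwt G a v₀ / 2) :=
    Real.mul_rpow hc.le (hvnn v₀)
  have h3 : (∏ v ∈ Finset.univ.erase v₀, (c * ERRWGraph.vwt G x v) ^ (-(ERRWGraph.avwt G a v + 1) / 2))
      = c ^ (∑ v ∈ Finset.univ.erase v₀, (-(ERRWGraph.avwt G a v + 1) / 2)) *
        ∏ v ∈ Finset.univ.erase v₀, ERRWGraph.vwt G x v ^ (-(ERRWGraph.avwt G a v + 1) / 2) := by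
    rw [aux_rpow_sum hc, ← Finset.prod_mul_distrib]
    exact Finset.prod_congr rfl fun v _ => Real.mul_rpow hc.le (hvnn v)
  have h4 : Real.sqrt (c ^ (Fintype.card V - 1))
      = c ^ (((Fintype.card V - 1 : ℕ) : ℝ) / 2) := by
    rw [← Real.rpow_natCast c (Fintype.card V - 1), Real.sqrt_eq_rpow,
      ← Real.rpow_mul hc.le, mul_one_div]
  rw [h1, h2, h3, h4]
  have hc4 : c ^ (∑ e : G.edgeSet, a (e : Sym2 V)) * c ^ (-ERRWGraph.avwt G a v₀ / 2) *
      c ^ (∑ v ∈ Finset.univ.erase v₀, (-(ERRWGraph.avwt G a v + 1) / 2)) *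
      c ^ (((Fintype.card V - 1 : ℕ) : ℝ) / 2) = 1 := by
    rw [← Real.rpow_add hc, ← Real.rpow_add hc, ← Real.rpow_add hc, hsum, Real.rpow_zero]
  linear_combination (∏ e : G.edgeSet, x e ^ a (e : Sym2 V)) *
    (ERRWGraph.vwt G x v₀ ^ (-ERRWGraph.avwt G a v₀ / 2)) *
    (∏ v ∈ Finset.univ.erase v₀, ERRWGraph.vwt G x v ^ (-(ERRWGraph.avwt G a v + 1) / 2)) *
    Real.sqrt (ERRWGraph.treeSum G x) * hc4

end AuxProof

open ERRWGraph in
/-- Lemma 3.5(a),(b): the image of the measure `Φ_{v₀,a} dρ_{e₀}` under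
`g_{e₀,e₁}` equals `Φ_{v₀,a} dρ_{e₁}`, and consequently `z_{v₀,e₀} = z_{v₀,e₁}`. -/
theorem Phi_rho_image {V : Type*} [Fintype V] [DecidableEq V]
    (G : SimpleGraph V) [Fintype G.edgeSet] (hG : G.Connected)
    (a : Sym2 V → ℝ) (ha : ∀ e ∈ G.edgeSet, 0 < a e) (v₀ : V)
    (e₀ e₁ : G.edgeSet) :
    (∀ f : (G.edgeSet → ℝ) → ℝ≥0∞, Measurable f →
      (∫⁻ x, f (fun e => x e / x e₁) * ENNReal.ofReal (Phi G a v₀ x) ∂rho G e₀) =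
        ∫⁻ x, f x * ENNReal.ofReal (Phi G a v₀ x) ∂rho G e₁) ∧
    z G a v₀ e₀ = z G a v₀ e₁ := by
  have hPhi : Measurable (Phi G a v₀) := aux_measurable_Phi G a v₀
  set μ0 : G.edgeSet → Measure ℝ :=
    (fun e => if e = e₀ then Measure.dirac 1 else logMeasure) with hμ0
  set μ1 : G.edgeSet → Measure ℝ :=
    (fun e => if e = e₁ then Measure.dirac 1 else logMeasure) with hμ1
  haveI : ∀ e : G.edgeSet, SigmaFinite (μ0 e) := fun e => by
    simp only [hμ0]; split <;> infer_instance
  haveI : ∀ e : G.edgeSet, SigmaFinite (μ1 e) := fun e => by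
    simp only [hμ1]; split <;> infer_instance
  have hrho0 : rho G e₀ = Measure.pi μ0 := rfl
  have hrho1 : rho G e₁ = Measure.pi μ1 := rfl
  have main : ∀ f : (G.edgeSet → ℝ) → ℝ≥0∞, Measurable f →
      (∫⁻ x, f (fun e => x e / x e₁) * ENNReal.ofReal (Phi G a v₀ x) ∂rho G e₀) =
        ∫⁻ x, f x * ENNReal.ofReal (Phi G a v₀ x) ∂rho G e₁ := by
    intro f hf
    have hHm : Measurable fun y : G.edgeSet → ℝ => f y * ENNReal.ofReal (Phi G a v₀ y) :=
      hf.mul (ENNReal.measurable_ofReal.comp hPhi)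
    have hstep1 : (∫⁻ x, f (fun e => x e / x e₁) * ENNReal.ofReal (Phi G a v₀ x) ∂rho G e₀)
        = ∫⁻ x, f (fun e => x e / x e₁) *
            ENNReal.ofReal (Phi G a v₀ (fun e => x e / x e₁)) ∂rho G e₀ := by
      refine lintegral_congr_ae ?_
      have hae : ∀ᵐ x ∂rho G e₀, ∀ e, 0 < x e := by
        rw [hrho0]
        exact pi_ae_pos e₀ μ0 (by simp [hμ0]) (fun e he => by simp [hμ0, he])
      filter_upwards [hae] with x hx
      have hdiv : (fun e => x e / x e₁) = fun e => (x e₁)⁻¹ * x e :=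
        funext fun e => div_eq_inv_mul _ _
      rw [hdiv, aux_Phi_smul G a v₀ x hx (inv_pos.mpr (hx e₁))]
    rw [hstep1, hrho0, hrho1]
    exact pi_div_map e₀ e₁ μ0 μ1 (by simp [hμ0]) (fun e he => by simp [hμ0, he])
      (by simp [hμ1]) (fun e he => by simp [hμ1, he]) _ hHm
  refine ⟨main, ?_⟩
  have h1 := main (fun _ => 1) measurable_const
  simpa [z, one_mul] using h1
end

section
/- For all e₀, e₁ ∈ E: (a) the normalizing constant of the interpolated measure does not depend on the reference edge, Z_{v₀,v₁,e₀} = Z_{v₀,v₁,e₁}; and (b) the image of ℙ_{v₀,v₁,e₀} under the bijection g_{e₀,e₁}: Ω_{e₀} → Ω_{e₁} equals ℙ_{v₀,v₁,e₁}. -/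
open MeasureTheory
open scoped ENNReal Classical

open ERRWGraph in
lemma ERRW_withDensity_map_comp {α β : Type*} [MeasurableSpace α] [MeasurableSpace β]
    (μ : Measure α) {g : α → β} (hg : Measurable g) {f : β → ℝ≥0∞} (hf : Measurable f) :
    (μ.map g).withDensity f = (μ.withDensity (fun a => f (g a))).map g := by
  ext s hs
  rw [withDensity_apply _ hs, Measure.map_apply hg hs, withDensity_apply _ (hg hs),
    setLIntegral_map hs hf hg]

open ERRWGraph in
lemma ERRW_map_exp_volume : Measure.map Real.exp volume = logMeasure := by
  have hsm : ∀ x : ℝ, (Real.exp x • (1 : ℝ →L[ℝ] ℝ))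
      = ((1 : ℝ →L[ℝ] ℝ).smulRight (Real.exp x)) := by
    intro x; ext y; simp [mul_comm]
  have hder : ∀ x ∈ Set.univ, HasFDerivWithinAt Real.exp
      (Real.exp x • (1 : ℝ →L[ℝ] ℝ)) Set.univ x := by
    intro x _
    rw [hsm]
    exact ((Real.hasDerivAt_exp x).hasFDerivAt.hasFDerivWithinAt)
  have hdet : ∀ x : ℝ, (Real.exp x • (1 : ℝ →L[ℝ] ℝ)).det = Real.exp x := by
    intro x
    rw [ContinuousLinearMap.det, ContinuousLinearMap.coe_smul, ContinuousLinearMap.one_def,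
      ContinuousLinearMap.coe_id, LinearMap.det_smul, LinearMap.det_id]
    simp
  have key := map_withDensity_abs_det_fderiv_eq_addHaar (volume : Measure ℝ)
    (MeasurableSet.univ (α := ℝ)).nullMeasurableSet hder (Real.exp_injective.injOn)
  simp only [Measure.restrict_univ, hdet] at key
  have himg : Real.exp '' Set.univ = Set.Ioi (0:ℝ) := by
    rw [Set.image_univ, Real.range_exp]
  rw [himg] at key
  have habs : (fun x => ENNReal.ofReal |Real.exp x|) = fun x => ENNReal.ofReal (Real.exp x) := by
    funext x; rw [abs_of_pos (Real.exp_pos x)]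
  rw [habs] at key
  calc Measure.map Real.exp volume
      = Measure.map Real.exp (volume.withDensity
          ((fun x => ENNReal.ofReal (Real.exp x)) * fun x => ENNReal.ofReal (1 / Real.exp x))) := by
        congr 1
        conv_lhs => rw [← withDensity_one (μ := (volume : Measure ℝ))]
        congr 1
        funext x
        simp [Pi.mul_apply, ← ENNReal.ofReal_mul (Real.exp_pos x).le,
          mul_one_div, div_self (Real.exp_pos x).ne']
    _ = Measure.map Real.exp ((volume.withDensity fun x => ENNReal.ofReal (Real.exp x)).withDensity
          fun x => ENNReal.ofReal (1 / Real.exp x)) := by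
        rw [withDensity_mul]
        · exact ENNReal.measurable_ofReal.comp Real.measurable_exp
        · exact ENNReal.measurable_ofReal.comp (Real.measurable_exp.const_div 1)
    _ = logMeasure := by
        rw [← ERRW_withDensity_map_comp _ Real.measurable_exp
            (f := fun x => ENNReal.ofReal (1 / x))
            (ENNReal.measurable_ofReal.comp (measurable_id.const_div 1)), key]
        rfl

open ERRWGraph in
instance : SigmaFinite logMeasure :=
  SigmaFinite.withDensity_of_ne_top (ae_of_all _ fun _ => ENNReal.ofReal_ne_top)

section ERRWAux

open ERRWGraph

variable {ι : Type*} [Fintype ι] [DecidableEq ι]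

/-- extension of a function on `ι \ {i₀}` by the value `c` at `i₀`. -/
def ERRWextFun (i₀ : ι) (c : ℝ) (z : {e : ι // e ≠ i₀} → ℝ) : ι → ℝ :=
  fun e => if h : e = i₀ then c else z ⟨e, h⟩

lemma ERRW_measurable_extFun (i₀ : ι) (c : ℝ) : Measurable (ERRWextFun i₀ c) := by
  apply measurable_pi_lambda
  intro e
  by_cases h : e = i₀
  · simpa [ERRWextFun, h] using measurable_const
  · simpa [ERRWextFun, h] using measurable_pi_apply _

lemma ERRW_map_extFun (i₀ : ι) (c : ℝ) (μ : Measure ℝ) [SigmaFinite μ] :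
    Measure.map (ERRWextFun i₀ c) (Measure.pi fun _ : {e : ι // e ≠ i₀} => μ)
      = Measure.pi (fun e => if e = i₀ then Measure.dirac c else μ) := by
  have : ∀ e, SigmaFinite ((fun e => if e = i₀ then Measure.dirac c else μ) e) := by
    intro e; by_cases h : e = i₀ <;> simp [h] <;> infer_instance
  refine (Measure.pi_eq fun s hs => ?_).symm
  rw [Measure.map_apply (ERRW_measurable_extFun i₀ c) (MeasurableSet.univ_pi hs)]
  have hpre : ERRWextFun i₀ c ⁻¹' Set.pi Set.univ s =
      if c ∈ s i₀ then Set.pi Set.univ (fun e' : {e : ι // e ≠ i₀} => s e'.val) else ∅ := by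
    ext z
    by_cases hc : c ∈ s i₀
    · simp only [hc, if_true, Set.mem_preimage, Set.mem_pi, Set.mem_univ, true_implies]
      constructor
      · intro h e'
        have := h e'.val
        simpa [ERRWextFun, e'.prop] using this
      · intro h e
        by_cases he : e = i₀
        · simpa [ERRWextFun, he] using hc
        · simpa [ERRWextFun, he] using h ⟨e, he⟩
    · simp only [hc, if_false, Set.mem_preimage, Set.mem_pi, Set.mem_univ, true_implies,
        Set.mem_empty_iff_false, iff_false, not_forall]
      exact ⟨i₀, by simpa [ERRWextFun] using hc⟩
  rw [hpre]
  by_cases hc : c ∈ s i₀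
  · rw [if_pos hc, Measure.pi_pi]
    have h1 : ∏ e : ι, ((fun e => if e = i₀ then Measure.dirac c else μ) e) (s e)
        = (Measure.dirac c) (s i₀) * ∏ e' : {e : ι // e ≠ i₀}, μ (s e'.val) := by
      rw [Finset.prod_eq_mul_prod_sdiff_singleton_of_mem (Finset.mem_univ i₀)]
      congr 1
      · simp
      · rw [Finset.prod_subtype (p := fun e => e ≠ i₀) (Finset.univ \ {i₀}) (fun x => by simp)
          (fun e => ((fun e => if e = i₀ then Measure.dirac c else μ) e) (s e))]
        exact Finset.prod_congr rfl fun e' _ => by simp [e'.prop]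
    rw [h1, Measure.dirac_apply' _ (hs i₀), Set.indicator_of_mem hc]
    simp
  · rw [if_neg hc]
    simp only [measure_empty]
    symm
    apply Finset.prod_eq_zero (Finset.mem_univ i₀)
    simp [Measure.dirac_apply' _ (hs i₀), Set.indicator_of_notMem hc]

/-- the bijection between `ι \ {e₀}` and `ι \ {e₁}` sending `e₁` to `e₀`. -/
def ERRWswapAway (e₀ e₁ : ι) (h : e₀ ≠ e₁) : {e : ι // e ≠ e₀} ≃ {e : ι // e ≠ e₁} where
  toFun e := if h' : e.val = e₁ then ⟨e₀, h⟩ else ⟨e.val, h'⟩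
  invFun f := if h' : f.val = e₀ then ⟨e₁, Ne.symm h⟩ else ⟨f.val, h'⟩
  left_inv e := by
    rcases e with ⟨v, hv⟩
    by_cases h1 : v = e₁
    · simp [h1]
    · simp [h1, hv]
  right_inv f := by
    rcases f with ⟨v, hv⟩
    by_cases h1 : v = e₀
    · simp [h1, Ne.symm h]
    · simp [h1, hv]

lemma ERRW_map_sub_pi (e₀ e₁ : ι) :
    Measure.map (fun (y : ι → ℝ) (e : ι) => y e - y e₁)
      (Measure.pi fun e => if e = e₀ then Measure.dirac (0:ℝ) else volume)
    = Measure.pi fun e => if e = e₁ then Measure.dirac (0:ℝ) else volume := by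
  have hL : Measurable (fun (y : ι → ℝ) (e : ι) => y e - y e₁) :=
    measurable_pi_lambda _ fun e => (measurable_pi_apply e).sub (measurable_pi_apply e₁)
  rw [← ERRW_map_extFun e₀ 0 volume, ← ERRW_map_extFun e₁ 0 volume,
    Measure.map_map hL (ERRW_measurable_extFun _ _)]
  by_cases hne : e₀ = e₁
  · subst hne
    congr 1
    funext z e
    by_cases h : e = e₀
    · simp [ERRWextFun, h]
    · simp [ERRWextFun, h]
  · set j : {e : ι // e ≠ e₀} := ⟨e₁, Ne.symm hne⟩ with hj
    set A : Matrix {e : ι // e ≠ e₀} {e : ι // e ≠ e₀} ℝ :=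
      Matrix.updateCol 1 j (fun _ => -1) with hA
    set M := Matrix.toLin' A with hM
    have hMapply : ∀ (z : {e : ι // e ≠ e₀} → ℝ) (f : {e : ι // e ≠ e₀}),
        M z f = (if f = j then 0 else z f) - z j := by
      intro z f
      rw [hM, Matrix.toLin'_apply, Matrix.mulVec, dotProduct]
      have : ∀ g : {e : ι // e ≠ e₀}, A f g * z g =
          (if f = g ∧ g ≠ j then z g else 0) + (if g = j then -z j else 0) := by
        intro g
        rw [hA, Matrix.updateCol_apply]
        by_cases hgj : g = j
        · subst hgj; simp
        · simp only [hgj, if_false, and_true, Matrix.one_apply, ite_and, add_zero]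
          by_cases hfg : f = g <;> simp [hfg, hgj, Ne.symm]
      rw [Finset.sum_congr rfl fun g _ => this g, Finset.sum_add_distrib]
      congr 1
      · have h2 : ∀ x : {e : ι // e ≠ e₀}, (if f = x ∧ x ≠ j then z x else 0)
            = if x = f then (if f = j then 0 else z x) else 0 := by
          intro x
          by_cases hxf : x = f
          · subst hxf
            by_cases hxj : x = j <;> simp [hxj]
          · have hnand : ¬(f = x ∧ x ≠ j) := fun h => hxf h.1.symm
            simp [hxf, hnand]
        rw [Finset.sum_congr rfl fun x _ => h2 x,
          Finset.sum_ite_eq' Finset.univ f (fun x => if f = j then 0 else z x)]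
        simp
      · simp
    have hdet : LinearMap.det M = -1 := by
      rw [hM, LinearMap.det_toLin', hA, ← Matrix.cramer_apply, Matrix.cramer_one]
      simp
    have hMmeas : Measurable M := M.continuous_of_finiteDimensional.measurable
    have hvolM : Measure.map M (volume : Measure ({e : ι // e ≠ e₀} → ℝ)) = volume := by
      rw [Real.map_linearMap_volume_pi_eq_smul_volume_pi (by rw [hdet]; norm_num), hdet]
      norm_num
    set σ := ERRWswapAway e₀ e₁ hne with hσdef
    have hσ := measurePreserving_piCongrLeft (fun _ : {e : ι // e ≠ e₁} => (volume : Measure ℝ)) σ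
    set pcg := MeasurableEquiv.piCongrLeft (fun _ : {e : ι // e ≠ e₁} => ℝ) σ with hpcgdef
    have hpcg : ∀ (w : {e : ι // e ≠ e₀} → ℝ) (b : {e : ι // e ≠ e₁}),
        pcg w b = w (σ.symm b) := by
      intro w b
      show (Equiv.piCongrLeft (fun _ => ℝ) σ) w b = w (σ.symm b)
      conv_lhs => rw [← σ.apply_symm_apply b]
      rw [Equiv.piCongrLeft_apply_apply]
    have hσsymm : ∀ b : {e : ι // e ≠ e₁}, (σ.symm b : ι) = if b.val = e₀ then e₁ else b.val := by
      intro b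
      rcases b with ⟨v, hv⟩
      by_cases h1 : v = e₀ <;> simp [hσdef, ERRWswapAway, h1]
    have hcomp : ((fun (y : ι → ℝ) (e : ι) => y e - y e₁) ∘ ERRWextFun e₀ 0)
        = ERRWextFun e₁ 0 ∘ (⇑pcg ∘ ⇑M) := by
      funext z
      funext e
      simp only [Function.comp_apply]
      by_cases h1 : e = e₁
      · have h2 : ERRWextFun e₀ 0 z e₁ = z j := by
          simp only [ERRWextFun]
          rw [dif_neg (Ne.symm hne)]
        rw [h1, h2]
        simp [ERRWextFun]
      · rw [show ERRWextFun e₁ 0 (pcg (M z)) e = pcg (M z) ⟨e, h1⟩ from by simp [ERRWextFun, h1]]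
        rw [hpcg, hMapply]
        by_cases h2 : e = e₀
        · rcases h2
          have : σ.symm ⟨e₀, h1⟩ = j := by
            apply Subtype.ext
            rw [hσsymm]; simp [hj]
          rw [this]
          simp [ERRWextFun, hMapply, hj]
          exact dif_neg (fun h => hne h.symm)
        · have : σ.symm ⟨e, h1⟩ = ⟨e, h2⟩ := by
            apply Subtype.ext
            rw [hσsymm]; simp [h2]
          rw [this]
          have hej : (⟨e, h2⟩ : {e : ι // e ≠ e₀}) ≠ j := by
            simp only [hj, ne_eq, Subtype.mk.injEq]; exact h1
          simp [ERRWextFun, h2, hej, hj, Ne.symm hne, h1]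
    rw [hcomp, ← Measure.map_map (ERRW_measurable_extFun _ _) (pcg.measurable.comp hMmeas),
      ← Measure.map_map pcg.measurable hMmeas]
    congr 1
    have hv0 : (Measure.pi fun _ : {e : ι // e ≠ e₀} => (volume : Measure ℝ)) = volume :=
      (volume_pi).symm
    rw [hv0, hvolM, volume_pi]
    exact hσ.map_eq

lemma ERRW_map_exp_pi (i₀ : ι) :
    Measure.map (fun (y : ι → ℝ) (e : ι) => Real.exp (y e))
      (Measure.pi fun e => if e = i₀ then Measure.dirac (0:ℝ) else volume)
    = Measure.pi fun e => if e = i₀ then Measure.dirac (1:ℝ) else logMeasure := by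
  haveI hsf : ∀ e : ι, SigmaFinite ((fun e =>
      if e = i₀ then Measure.dirac (1:ℝ) else logMeasure) e) := by
    intro e; by_cases h : e = i₀ <;> simp [h] <;> infer_instance
  refine (measurePreserving_pi (fun e => if e = i₀ then Measure.dirac (0:ℝ) else volume)
    (fun e => if e = i₀ then Measure.dirac (1:ℝ) else logMeasure)
    (f := fun _ => Real.exp) fun e => ?_).map_eq
  by_cases h : e = i₀
  · subst h
    simp only [if_pos rfl, ite_true, eq_self_iff_true]
    refine ⟨Real.measurable_exp, ?_⟩
    rw [Measure.map_dirac' Real.measurable_exp]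
    simp
  · simp only [if_neg h]
    exact ⟨Real.measurable_exp, ERRW_map_exp_volume⟩

lemma ERRW_map_div_pi (e₀ e₁ : ι) :
    Measure.map (fun (x : ι → ℝ) (e : ι) => x e / x e₁)
      (Measure.pi fun e => if e = e₀ then Measure.dirac (1:ℝ) else logMeasure)
    = Measure.pi fun e => if e = e₁ then Measure.dirac (1:ℝ) else logMeasure := by
  have hdiv : Measurable (fun (x : ι → ℝ) (e : ι) => x e / x e₁) :=
    measurable_pi_lambda _ fun e => (measurable_pi_apply e).div (measurable_pi_apply e₁)
  have hexp : Measurable (fun (y : ι → ℝ) (e : ι) => Real.exp (y e)) :=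
    measurable_pi_lambda _ fun e => Real.measurable_exp.comp (measurable_pi_apply e)
  have hsub : Measurable (fun (y : ι → ℝ) (e : ι) => y e - y e₁) :=
    measurable_pi_lambda _ fun e => (measurable_pi_apply e).sub (measurable_pi_apply e₁)
  rw [← ERRW_map_exp_pi e₀, ← ERRW_map_exp_pi e₁, Measure.map_map hdiv hexp,
    ← ERRW_map_sub_pi e₀ e₁, Measure.map_map hexp hsub]
  congr 1
  funext y
  funext e
  simp [Real.exp_sub]

end ERRWAux
section ERRWGraphAux

open ERRWGraph

variable {V : Type*} [Fintype V] [DecidableEq V] (G : SimpleGraph V) [Fintype G.edgeSet]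

lemma ERRW_spanningTree_card (T : Finset G.edgeSet) (hT : IsSpanningTree G T) :
    T.card = Fintype.card V - 1 := by
  classical
  set S : Set (Sym2 V) := Subtype.val '' (T : Set G.edgeSet) with hS
  have hSfin : S.Finite := T.finite_toSet.image _
  have hES : (SimpleGraph.fromEdgeSet S).edgeSet = S := by
    rw [SimpleGraph.edgeSet_fromEdgeSet]
    ext x
    simp only [Set.mem_diff, Set.mem_setOf_eq, and_iff_left_iff_imp]
    intro hx
    obtain ⟨e, _, rfl⟩ := hx
    exact G.not_isDiag_of_mem_edgeSet e.prop
  haveI : Fintype (SimpleGraph.fromEdgeSet S).edgeSet := (hES ▸ hSfin).fintype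
  have h1 := hT.card_edgeFinset
  have h2 : S.toFinset = T.image Subtype.val := by
    ext x; simp [hS]
  have h3 : (SimpleGraph.fromEdgeSet S).edgeFinset.card = T.card := by
    rw [SimpleGraph.edgeFinset, Set.toFinset_card, Fintype.card_congr (Equiv.setCongr hES),
      ← Set.toFinset_card, h2, Finset.card_image_of_injective T Subtype.val_injective]
  have h1' : (SimpleGraph.fromEdgeSet S).edgeFinset.card + 1 = Fintype.card V := h1
  omega

lemma ERRW_sum_avwt (a : Sym2 V → ℝ) :
    ∑ v : V, avwt G a v = 2 * ∑ e : G.edgeSet, a (e : Sym2 V) := by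
  unfold avwt
  rw [Finset.sum_comm, Finset.mul_sum]
  refine Finset.sum_congr rfl fun e _ => ?_
  obtain ⟨es, he⟩ := e
  induction es with
  | h u w =>
    have hne : u ≠ w := G.ne_of_adj ((SimpleGraph.mem_edgeSet G).mp he)
    have hmem : ∀ v : V, (if v ∈ (s(u, w) : Sym2 V) then a s(u, w) else 0)
        = if v ∈ ({u, w} : Finset V) then a s(u, w) else 0 := by
      intro v; simp [Sym2.mem_iff]
    rw [Finset.sum_congr rfl fun v _ => hmem v]
    rw [Finset.sum_ite_mem, Finset.univ_inter, Finset.sum_const,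
      Finset.card_pair hne]
    simp [two_mul, two_smul]

variable {G}

lemma ERRW_vwt_nonneg {x : G.edgeSet → ℝ} (hx : ∀ e, 0 ≤ x e) (v : V) : 0 ≤ vwt G x v :=
  Finset.sum_nonneg fun e _ => by by_cases h : v ∈ (e : Sym2 V) <;> simp [h, hx e]

lemma ERRW_vwt_smul (x : G.edgeSet → ℝ) (c : ℝ) (v : V) :
    vwt G (fun e => c * x e) v = c * vwt G x v := by
  simp [vwt, Finset.mul_sum, mul_ite, mul_zero]

lemma ERRW_treeSum_smul (x : G.edgeSet → ℝ) (c : ℝ) :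
    treeSum G (fun e => c * x e) = c ^ (Fintype.card V - 1) * treeSum G x := by
  unfold treeSum
  rw [Finset.mul_sum]
  refine Finset.sum_congr rfl fun T _ => ?_
  by_cases hT : IsSpanningTree G T
  · rw [if_pos hT, if_pos hT, Finset.prod_mul_distrib, Finset.prod_const,
      ERRW_spanningTree_card G T hT]
  · simp [hT]

lemma ERRW_rpow_prod (c : ℝ) (hc : 0 < c) {κ : Type*} [Fintype κ] (f : κ → ℝ) :
    ∏ k : κ, c ^ (f k) = c ^ (∑ k : κ, f k) := by
  simp_rw [Real.rpow_def_of_pos hc, ← Real.exp_sum, Finset.mul_sum]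

lemma ERRW_Phi_smul (a : Sym2 V → ℝ) (v₀ : V) (x : G.edgeSet → ℝ) (hx : ∀ e, 0 ≤ x e)
    (c : ℝ) (hc : 0 < c) :
    Phi G a v₀ (fun e => c * x e) = Phi G a v₀ x := by
  have hVne : Nonempty V := ⟨v₀⟩
  set m : ℕ := Fintype.card V - 1 with hm
  set A : ℝ := ∑ e : G.edgeSet, a (e : Sym2 V) with hA
  unfold Phi
  have h1 : ∏ e : G.edgeSet, (c * x e) ^ a (e : Sym2 V)
      = c ^ A * ∏ e : G.edgeSet, (x e) ^ a (e : Sym2 V) := by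
    rw [Finset.prod_congr rfl fun e _ => Real.mul_rpow hc.le (hx e), Finset.prod_mul_distrib,
      ERRW_rpow_prod c hc]
  have h2 : ∀ (v : V) (p : ℝ), vwt G (fun e => c * x e) v ^ p = c ^ p * vwt G x v ^ p := by
    intro v p
    rw [ERRW_vwt_smul, Real.mul_rpow hc.le (ERRW_vwt_nonneg hx v)]
  have h3 : ∏ v ∈ Finset.univ.erase v₀, vwt G (fun e => c * x e) v ^ (-(avwt G a v + 1) / 2)
      = c ^ (∑ v ∈ Finset.univ.erase v₀, (-(avwt G a v + 1) / 2)) *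
        ∏ v ∈ Finset.univ.erase v₀, vwt G x v ^ (-(avwt G a v + 1) / 2) := by
    rw [Finset.prod_congr rfl fun v _ => h2 v _, Finset.prod_mul_distrib]
    congr 1
    simp_rw [Real.rpow_def_of_pos hc, ← Real.exp_sum, Finset.mul_sum]
  have h4 : Real.sqrt (treeSum G (fun e => c * x e))
      = c ^ ((m : ℝ) / 2) * Real.sqrt (treeSum G x) := by
    rw [ERRW_treeSum_smul, Real.sqrt_mul (pow_nonneg hc.le m), ← Real.rpow_natCast c m,
      Real.sqrt_eq_rpow, ← Real.rpow_mul hc.le, mul_one_div]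
  rw [h1, h2 v₀ _, h3, h4]
  have hcard : (Finset.univ.erase v₀).card = m := by
    rw [Finset.card_erase_of_mem (Finset.mem_univ v₀), Finset.card_univ]
  have hsume : ∑ v ∈ Finset.univ.erase v₀, (-(avwt G a v + 1) / 2)
      = -((2 * A - avwt G a v₀) + m) / 2 := by
    have hs0 : ∑ v ∈ Finset.univ.erase v₀, avwt G a v = 2 * A - avwt G a v₀ := by
      have hh := Finset.sum_erase_add Finset.univ (avwt G a) (Finset.mem_univ v₀)
      have h2' := ERRW_sum_avwt G a
      rw [hA, ← h2']
      linarith [hh]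
    calc ∑ v ∈ Finset.univ.erase v₀, (-(avwt G a v + 1) / 2)
        = (∑ v ∈ Finset.univ.erase v₀, -(avwt G a v + 1)) / 2 := by rw [Finset.sum_div]
      _ = -(∑ v ∈ Finset.univ.erase v₀, (avwt G a v + 1)) / 2 := by rw [Finset.sum_neg_distrib]
      _ = -((∑ v ∈ Finset.univ.erase v₀, avwt G a v) + ((Finset.univ.erase v₀).card : ℝ)) / 2 := by
          rw [Finset.sum_add_distrib, Finset.sum_const, nsmul_eq_mul, mul_one]
      _ = -((2 * A - avwt G a v₀) + m) / 2 := by rw [hs0, hcard]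
  have hzero : c ^ A * c ^ (-avwt G a v₀ / 2) *
      c ^ (∑ v ∈ Finset.univ.erase v₀, (-(avwt G a v + 1) / 2)) * c ^ ((m : ℝ) / 2) = 1 := by
    rw [hsume, ← Real.rpow_add hc, ← Real.rpow_add hc, ← Real.rpow_add hc]
    rw [show A + -avwt G a v₀ / 2 + -(2 * A - avwt G a v₀ + ↑m) / 2 + (m : ℝ) / 2 = 0 by ring]
    exact Real.rpow_zero c
  calc c ^ A * (∏ e : G.edgeSet, x e ^ a (e : Sym2 V)) *
        (c ^ (-avwt G a v₀ / 2) * vwt G x v₀ ^ (-avwt G a v₀ / 2)) *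
        (c ^ (∑ v ∈ Finset.univ.erase v₀, (-(avwt G a v + 1) / 2)) *
          ∏ v ∈ Finset.univ.erase v₀, vwt G x v ^ (-(avwt G a v + 1) / 2)) *
        (c ^ ((m : ℝ) / 2) * Real.sqrt (treeSum G x))
      = (c ^ A * c ^ (-avwt G a v₀ / 2) *
          c ^ (∑ v ∈ Finset.univ.erase v₀, (-(avwt G a v + 1) / 2)) * c ^ ((m : ℝ) / 2)) *
        ((∏ e : G.edgeSet, x e ^ a (e : Sym2 V)) * vwt G x v₀ ^ (-avwt G a v₀ / 2) *
          (∏ v ∈ Finset.univ.erase v₀, vwt G x v ^ (-(avwt G a v + 1) / 2)) *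
          Real.sqrt (treeSum G x)) := by ring
    _ = _ := by rw [hzero, one_mul]

variable (G)

lemma ERRW_measurable_vwt (v : V) : Measurable (fun x : G.edgeSet → ℝ => vwt G x v) := by
  unfold vwt
  refine Finset.measurable_sum _ fun e _ => ?_
  by_cases h : v ∈ (e : Sym2 V)
  · simpa [h] using measurable_pi_apply e
  · simpa [h] using measurable_const

lemma ERRW_measurable_Phi (a : Sym2 V → ℝ) (v₀ : V) : Measurable (Phi G a v₀) := by
  unfold Phi
  refine (((Finset.measurable_prod _ fun e _ => (measurable_pi_apply e).pow measurable_const).mul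
    ((ERRW_measurable_vwt G v₀).pow measurable_const)).mul
    (Finset.measurable_prod _ fun v _ => (ERRW_measurable_vwt G v).pow measurable_const)).mul
    (Real.continuous_sqrt.measurable.comp ?_)
  unfold treeSum
  refine Finset.measurable_sum _ fun T _ => ?_
  by_cases hT : IsSpanningTree G T
  · simpa [hT] using Finset.measurable_prod (T : Finset G.edgeSet) fun e _ => measurable_pi_apply e
  · simpa [hT] using measurable_const

lemma ERRW_logMeasure_Iic : logMeasure (Set.Iic (0:ℝ)) = 0 := by
  rw [logMeasure, withDensity_apply _ measurableSet_Iic, Measure.restrict_restrict measurableSet_Iic,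
    Set.Iic_inter_Ioi, Set.Ioc_self, Measure.restrict_empty, lintegral_zero_measure]

lemma ERRW_rho_ae_pos (e₀ : G.edgeSet) : ∀ᵐ x ∂rho G e₀, ∀ e, 0 < x e := by
  rw [ae_all_iff]
  intro e
  rw [ae_iff]
  have hset : {x : G.edgeSet → ℝ | ¬ 0 < x e} = Function.eval e ⁻¹' (Set.Iic (0:ℝ)) := by
    ext x; simp [not_lt]
  rw [hset, rho]
  haveI : ∀ i : G.edgeSet, SigmaFinite (if i = e₀ then Measure.dirac (1:ℝ) else logMeasure) := by
    intro i; by_cases h : i = e₀ <;> simp [h] <;> infer_instance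
  apply Measure.pi_eval_preimage_null
  by_cases h : e = e₀
  · rw [if_pos h, Measure.dirac_apply' _ measurableSet_Iic]
    simp
  · rw [if_neg h]
    exact ERRW_logMeasure_Iic

lemma ERRW_map_rho (e₀ e₁ : G.edgeSet) :
    (rho G e₀).map (fun x (e : G.edgeSet) => x e / x e₁) = rho G e₁ := by
  rw [rho, rho]
  exact ERRW_map_div_pi e₀ e₁

lemma ERRW_Phi_div (a : Sym2 V → ℝ) (v : V) (e₁ : G.edgeSet) (x : G.edgeSet → ℝ)
    (hx : ∀ e, 0 < x e) :
    Phi G a v (fun e => x e / x e₁) = Phi G a v x := by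
  have h : (fun e => x e / x e₁) = fun e => (x e₁)⁻¹ * x e := by
    funext e; rw [div_eq_inv_mul]
  rw [h, ERRW_Phi_smul a v x (fun e => (hx e).le) _ (inv_pos.mpr (hx e₁))]

lemma ERRW_z_eq (a : Sym2 V → ℝ) (v : V) (e₀ e₁ : G.edgeSet) :
    z G a v e₁ = z G a v e₀ := by
  have hg : Measurable (fun (x : G.edgeSet → ℝ) (e : G.edgeSet) => x e / x e₁) :=
    measurable_pi_lambda _ fun e => (measurable_pi_apply e).div (measurable_pi_apply e₁)
  unfold z
  rw [← ERRW_map_rho G e₀ e₁,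
    lintegral_map (ERRW_measurable_Phi G a v).ennreal_ofReal hg]
  refine lintegral_congr_ae ?_
  filter_upwards [ERRW_rho_ae_pos G e₀] with x hx
  rw [ERRW_Phi_div G a v e₁ x hx]

lemma ERRW_measurable_interpDens (a : Sym2 V → ℝ) (v₀ v₁ : V) (e' : G.edgeSet) :
    Measurable (interpDens G a v₀ v₁ e') := by
  unfold interpDens
  exact (((ENNReal.measurable_ofReal.comp (ERRW_measurable_Phi G a v₀)).div
    measurable_const).mul ((ENNReal.measurable_ofReal.comp (ERRW_measurable_Phi G a v₁)).div
    measurable_const)).pow measurable_const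

lemma ERRW_interpDens_div (a : Sym2 V → ℝ) (v₀ v₁ : V) (e₀ e₁ : G.edgeSet) :
    ∀ᵐ x ∂rho G e₀, interpDens G a v₀ v₁ e₀ x
      = interpDens G a v₀ v₁ e₁ (fun e => x e / x e₁) := by
  filter_upwards [ERRW_rho_ae_pos G e₀] with x hx
  unfold interpDens
  rw [ERRW_Phi_div G a v₀ e₁ x hx, ERRW_Phi_div G a v₁ e₁ x hx,
    ERRW_z_eq G a v₀ e₀ e₁, ERRW_z_eq G a v₁ e₀ e₁]

lemma ERRW_Zc_eq (a : Sym2 V → ℝ) (v₀ v₁ : V) (e₀ e₁ : G.edgeSet) :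
    Zc G a v₀ v₁ e₀ = Zc G a v₀ v₁ e₁ := by
  have hg : Measurable (fun (x : G.edgeSet → ℝ) (e : G.edgeSet) => x e / x e₁) :=
    measurable_pi_lambda _ fun e => (measurable_pi_apply e).div (measurable_pi_apply e₁)
  unfold Zc
  rw [← ERRW_map_rho G e₀ e₁, lintegral_map (ERRW_measurable_interpDens G a v₀ v₁ e₁) hg]
  exact lintegral_congr_ae (ERRW_interpDens_div G a v₀ v₁ e₀ e₁)

lemma ERRW_Pm_map (a : Sym2 V → ℝ) (v₀ v₁ : V) (e₀ e₁ : G.edgeSet) :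
    Measure.map (fun x (e : G.edgeSet) => x e / x e₁) (Pm G a v₀ v₁ e₀) = Pm G a v₀ v₁ e₁ := by
  have hg : Measurable (fun (x : G.edgeSet → ℝ) (e : G.edgeSet) => x e / x e₁) :=
    measurable_pi_lambda _ fun e => (measurable_pi_apply e).div (measurable_pi_apply e₁)
  unfold Pm
  rw [Measure.map_smul, ERRW_Zc_eq G a v₀ v₁ e₀ e₁]
  congr 1
  rw [withDensity_congr_ae (ERRW_interpDens_div G a v₀ v₁ e₀ e₁),
    ← ERRW_withDensity_map_comp (rho G e₀) hg (ERRW_measurable_interpDens G a v₀ v₁ e₁),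
    ERRW_map_rho G e₀ e₁]

end ERRWGraphAux
open ERRWGraph in
/-- Lemma 4.3(a),(b): the normalizing constant `Z_{v₀,v₁,e₀}` of the interpolated
measure does not depend on the reference edge, and the image of `ℙ_{v₀,v₁,e₀}`
under `g_{e₀,e₁}` equals `ℙ_{v₀,v₁,e₁}`. -/
theorem interp_change_of_normalization {V : Type*} [Fintype V] [DecidableEq V]
    (G : SimpleGraph V) [Fintype G.edgeSet] (hG : G.Connected)
    (a : Sym2 V → ℝ) (ha : ∀ e ∈ G.edgeSet, 0 < a e) (v₀ v₁ : V)
    (e₀ e₁ : G.edgeSet)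
    (hz0 : z G a v₀ e₀ ≠ ⊤) (hz1 : z G a v₁ e₀ ≠ ⊤) :
    Zc G a v₀ v₁ e₀ = Zc G a v₀ v₁ e₁ ∧
    Measure.map (fun x (e : G.edgeSet) => x e / x e₁) (Pm G a v₀ v₁ e₀) =
      Pm G a v₀ v₁ e₁ := 
  ⟨ERRW_Zc_eq G a v₀ v₁ e₀ e₁, ERRW_Pm_map G a v₀ v₁ e₀ e₁⟩
end

section
/- Suppose there exists an automorphism f of the weighted graph (G,a) with f(v₀) = v₁ and f(v₁) = v₀. Then for every e₀ ∈ E, the random variables x_{v₀}/x_{v₁} and x_{v₁}/x_{v₀} have the same law under the interpolated measure ℙ_{v₀,v₁,e₀}. -/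
open MeasureTheory
open scoped ENNReal Classical

namespace InterpSymAux

open MeasureTheory Real

noncomputable section

instance : SigmaFinite ERRWGraph.logMeasure := by
  unfold ERRWGraph.logMeasure
  exact MeasureTheory.SigmaFinite.withDensity_ofReal _

/-- The measure `dx/x` is the image of Lebesgue measure under `exp`. -/
lemma map_exp_volume : Measure.map Real.exp volume = ERRWGraph.logMeasure := by
  have hlog : Measure.map Real.log ERRWGraph.logMeasure = volume := by
    have hjac := MeasureTheory.map_withDensity_abs_det_fderiv_eq_addHaar (μ := volume)
      (f := Real.log) (f' := fun x => (1 : ℝ →L[ℝ] ℝ).smulRight x⁻¹) (s := Set.Ioi (0 : ℝ))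
      measurableSet_Ioi.nullMeasurableSet
      (fun x hx => ((Real.hasDerivAt_log (ne_of_gt hx)).hasFDerivAt).hasFDerivWithinAt)
      Real.log_injOn_pos
    have himg : Real.log '' Set.Ioi (0 : ℝ) = Set.univ := by
      apply Set.eq_univ_of_forall
      intro y
      exact ⟨Real.exp y, Real.exp_pos y, Real.log_exp y⟩
    have hdens : (volume.restrict (Set.Ioi (0 : ℝ))).withDensity
        (fun x => ENNReal.ofReal |((1 : ℝ →L[ℝ] ℝ).smulRight x⁻¹).det|) =
        ERRWGraph.logMeasure := by
      unfold ERRWGraph.logMeasure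
      apply withDensity_congr_ae
      filter_upwards [self_mem_ae_restrict (measurableSet_Ioi)] with x hx
      rw [ContinuousLinearMap.smulRight_one_eq_toSpanSingleton, ContinuousLinearMap.det_toSpanSingleton, abs_of_pos (inv_pos.mpr hx), one_div]
    rw [hdens, himg, Measure.restrict_univ] at hjac
    exact hjac
  have hae : ∀ᵐ x ∂ERRWGraph.logMeasure, x ∈ Set.Ioi (0 : ℝ) := by
    rw [ae_iff]
    have h0 : ERRWGraph.logMeasure {x : ℝ | ¬x ∈ Set.Ioi (0 : ℝ)} = 0 := by
      apply (withDensity_absolutelyContinuous _ _)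
      rw [Measure.restrict_apply' measurableSet_Ioi]
      have hset : {x : ℝ | ¬x ∈ Set.Ioi (0 : ℝ)} ∩ Set.Ioi (0 : ℝ) = ∅ :=
        Set.eq_empty_iff_forall_notMem.mpr (fun x hx => hx.1 hx.2)
      rw [hset, measure_empty]
    exact h0
  calc Measure.map Real.exp volume
      = Measure.map Real.exp (Measure.map Real.log ERRWGraph.logMeasure) := by rw [hlog]
    _ = Measure.map (Real.exp ∘ Real.log) ERRWGraph.logMeasure :=
        Measure.map_map Real.measurable_exp Real.measurable_log
    _ = Measure.map id ERRWGraph.logMeasure := by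
        apply Measure.map_congr
        filter_upwards [hae] with x hx
        exact Real.exp_log hx
    _ = ERRWGraph.logMeasure := Measure.map_id

section PiLemmas

variable {ι : Type*} [Fintype ι] [DecidableEq ι]

/-- The coordinates-exponential parametrization of `ρ_{i₀}`. -/
def Psi (i₀ : ι) (u : {i : ι // i ≠ i₀} → ℝ) : ι → ℝ :=
  fun i => if h : i = i₀ then 1 else Real.exp (u ⟨i, h⟩)

lemma measurable_Psi (i₀ : ι) : Measurable (Psi i₀) := by
  apply measurable_pi_lambda
  intro i
  by_cases h : i = i₀
  · simp only [Psi, dif_pos h]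
    exact measurable_const
  · simp only [Psi, dif_neg h]
    exact Real.measurable_exp.comp (measurable_pi_apply _)

lemma map_Psi (i₀ : ι) :
    Measure.map (Psi i₀) (volume : Measure ({i : ι // i ≠ i₀} → ℝ)) =
      Measure.pi (fun i => if i = i₀ then Measure.dirac (1 : ℝ) else ERRWGraph.logMeasure) := by
  haveI hsf : ∀ i : ι, SigmaFinite (if i = i₀ then Measure.dirac (1 : ℝ)
      else ERRWGraph.logMeasure) := by
    intro i
    by_cases h : i = i₀
    · rw [if_pos h]; infer_instance
    · rw [if_neg h]; infer_instance
  refine (Measure.pi_eq (μ := fun i => if i = i₀ then Measure.dirac (1 : ℝ)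
      else ERRWGraph.logMeasure) fun A hA => ?_).symm
  rw [Measure.map_apply (measurable_Psi i₀) (MeasurableSet.univ_pi hA)]
  by_cases h1 : (1 : ℝ) ∈ A i₀
  · have hpre : Psi i₀ ⁻¹' Set.pi Set.univ A =
        Set.pi Set.univ (fun j : {i : ι // i ≠ i₀} => Real.exp ⁻¹' A j.val) := by
      ext u
      simp only [Set.mem_preimage, Set.mem_pi, Set.mem_univ, forall_true_left, Psi]
      constructor
      · intro h j
        have := h j.val
        rwa [dif_neg j.2] at this
      · intro h i
        by_cases hi : i = i₀
        · rw [dif_pos hi, hi]; exact h1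
        · rw [dif_neg hi]; exact h ⟨i, hi⟩
    rw [hpre, volume_pi, Measure.pi_pi]
    have hL : ∀ j : {i : ι // i ≠ i₀}, (volume : Measure ℝ) (Real.exp ⁻¹' A j.val) =
        ERRWGraph.logMeasure (A j.val) := by
      intro j
      rw [← map_exp_volume, Measure.map_apply Real.measurable_exp (hA j.val)]
    calc (∏ j : {i : ι // i ≠ i₀}, (volume : Measure ℝ) (Real.exp ⁻¹' A j.val))
        = ∏ j : {i : ι // i ≠ i₀}, ERRWGraph.logMeasure (A j.val) := by
          exact Finset.prod_congr rfl fun j _ => hL j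
      _ = ∏ i ∈ Finset.univ.erase i₀, ERRWGraph.logMeasure (A i) :=
          (Finset.prod_subtype (p := fun i => i ≠ i₀) (Finset.univ.erase i₀)
            (fun i => by simp [Finset.mem_erase]) (fun i => ERRWGraph.logMeasure (A i))).symm
      _ = ∏ i, (if i = i₀ then Measure.dirac (1 : ℝ) else ERRWGraph.logMeasure) (A i) := by
          rw [← Finset.mul_prod_erase Finset.univ _ (Finset.mem_univ i₀)]
          rw [if_pos rfl, Measure.dirac_apply_of_mem h1, one_mul]
          exact Finset.prod_congr rfl fun i hi => by
            rw [if_neg (Finset.mem_erase.mp hi).1]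
  · have hpre : Psi i₀ ⁻¹' Set.pi Set.univ A = ∅ := by
      ext u
      simp only [Set.mem_preimage, Set.mem_pi, Set.mem_univ, forall_true_left,
        Set.mem_empty_iff_false, iff_false, not_forall]
      refine ⟨i₀, ?_⟩
      rw [Psi, dif_pos rfl]
      exact h1
    rw [hpre, measure_empty, eq_comm]
    refine Finset.prod_eq_zero (Finset.mem_univ i₀) ?_
    show (if i₀ = i₀ then Measure.dirac (1 : ℝ) else ERRWGraph.logMeasure) (A i₀) = 0
    rw [if_pos rfl, Measure.dirac_apply' _ (hA i₀), Set.indicator_of_notMem h1]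

lemma map_comp_perm (prm : ι ≃ ι) :
    Measure.map (fun u : ι → ℝ => u ∘ prm) volume = volume := by
  have h := (MeasureTheory.volume_measurePreserving_piCongrLeft (fun _ : ι => ℝ) prm).symm
  have heq : (fun u : ι → ℝ => u ∘ prm) =
      ⇑(MeasurableEquiv.piCongrLeft (fun _ : ι => ℝ) prm).symm := by
    funext u i
    have h2 : (MeasurableEquiv.piCongrLeft (fun _ : ι => ℝ) prm).symm u i = u (prm i) :=
      Equiv.piCongrLeft_symm_apply (fun _ => ℝ) prm u i
    rw [h2]
    rfl
  rw [heq]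
  exact h.map_eq

lemma map_shear_neg_aux (p : ι → Prop) [DecidablePred p] (j : ι) (hj : p j)
    (huniq : ∀ i, p i → i = j) :
    Measure.map (fun v : ι → ℝ => fun i => (if p i then 0 else v i) - v j) volume
      = volume := by
  have hphi : MeasurePreserving (MeasurableEquiv.piEquivPiSubtypeProd (fun _ : ι => ℝ) p)
      volume volume :=
    MeasureTheory.volume_preserving_piEquivPiSubtypeProd (fun _ : ι => ℝ) p
  set phi := MeasurableEquiv.piEquivPiSubtypeProd (fun _ : ι => ℝ) p with hphidef
  have hTh : MeasurePreserving (fun q : (({i : ι // p i} → ℝ) × ({i : ι // ¬p i} → ℝ)) =>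
      ((fun i => -q.1 i, fun i => q.2 i - q.1 ⟨j, hj⟩) :
        ({i : ι // p i} → ℝ) × ({i : ι // ¬p i} → ℝ))) volume volume := by
    rw [MeasureTheory.Measure.volume_eq_prod]
    have h1 : MeasurePreserving (fun a : {i : ι // p i} → ℝ => fun i => -a i)
        volume volume := by
      rw [volume_pi]
      exact measurePreserving_pi _ _ (fun i => Measure.measurePreserving_neg _)
    have hgm : Measurable (Function.uncurry
        (fun (a : {i : ι // p i} → ℝ) (b : {i : ι // ¬p i} → ℝ) =>
          (fun i => b i - a ⟨j, hj⟩ : {i : ι // ¬p i} → ℝ))) := by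
      apply measurable_pi_lambda
      intro i
      exact ((measurable_pi_apply i).comp measurable_snd).sub
        ((measurable_pi_apply _).comp measurable_fst)
    have hg : ∀ a : {i : ι // p i} → ℝ,
        Measure.map (fun b : {i : ι // ¬p i} → ℝ => fun i => b i - a ⟨j, hj⟩)
          volume = volume := by
      intro a
      have h2 : MeasurePreserving (fun b : {i : ι // ¬p i} → ℝ => fun i => b i - a ⟨j, hj⟩)
          volume volume := by
        rw [volume_pi]
        exact measurePreserving_pi _ _
          (fun i => measurePreserving_sub_right volume (a ⟨j, hj⟩))
      exact h2.map_eq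
    exact MeasurePreserving.skew_product
      (g := fun (a : {i : ι // p i} → ℝ) (b : {i : ι // ¬p i} → ℝ) =>
        (fun i => b i - a ⟨j, hj⟩ : {i : ι // ¬p i} → ℝ))
      h1 hgm (Filter.Eventually.of_forall hg)
  have heq : (fun v : ι → ℝ => fun i => (if p i then 0 else v i) - v j) =
      ⇑phi.symm ∘ ((fun q : (({i : ι // p i} → ℝ) × ({i : ι // ¬p i} → ℝ)) =>
        ((fun i => -q.1 i, fun i => q.2 i - q.1 ⟨j, hj⟩) :
          ({i : ι // p i} → ℝ) × ({i : ι // ¬p i} → ℝ))) ∘ ⇑phi) := by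
    funext v i
    simp only [Function.comp_apply, hphidef,
      MeasurableEquiv.piEquivPiSubtypeProd_apply,
      MeasurableEquiv.piEquivPiSubtypeProd_symm_apply]
    by_cases hi : p i
    · rw [dif_pos hi, if_pos hi, huniq i hi]
      ring
    · rw [dif_neg hi, if_neg hi]
  rw [heq]
  exact ((hphi.symm phi).comp (hTh.comp hphi)).map_eq

lemma map_shear_neg (j : ι) :
    Measure.map (fun v : ι → ℝ => fun i => (if i = j then 0 else v i) - v j) volume
      = volume :=
  map_shear_neg_aux (fun i => i = j) j rfl (fun _ h => h)

lemma map_L (σ : ι ≃ ι) (i₀ : ι) :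
    Measure.map (fun u : {i : ι // i ≠ i₀} → ℝ => fun e : {i : ι // i ≠ i₀} =>
      (if h : σ e.val = i₀ then 0 else u ⟨σ e.val, h⟩) -
      (if h : σ i₀ = i₀ then 0 else u ⟨σ i₀, h⟩)) volume = volume := by
  classical
  by_cases h0 : σ i₀ = i₀
  · have hs : ∀ e : {i : ι // i ≠ i₀}, σ e.val ≠ i₀ := by
      intro e he
      exact e.2 (σ.injective (he.trans h0.symm))
    let prm : {i : ι // i ≠ i₀} → {i : ι // i ≠ i₀} := fun e => ⟨σ e.val, hs e⟩
    have hinj : Function.Injective prm := by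
      intro x y hxy
      exact Subtype.ext (σ.injective (congrArg Subtype.val hxy))
    let prm' : {i : ι // i ≠ i₀} ≃ {i : ι // i ≠ i₀} :=
      Equiv.ofBijective prm ((Finite.injective_iff_bijective).mp hinj)
    have heq : (fun u : {i : ι // i ≠ i₀} → ℝ => fun e : {i : ι // i ≠ i₀} =>
        (if h : σ e.val = i₀ then 0 else u ⟨σ e.val, h⟩) -
        (if h : σ i₀ = i₀ then 0 else u ⟨σ i₀, h⟩)) = (fun u => u ∘ prm') := by
      funext u e
      rw [dif_neg (hs e), dif_pos h0, sub_zero]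
      rfl
    rw [heq, map_comp_perm]
  · have h1 : σ.symm i₀ ≠ i₀ := by
      intro h
      apply h0
      conv_lhs => rw [← h]
      simp
    let e₁ : {i : ι // i ≠ i₀} := ⟨σ.symm i₀, h1⟩
    have hse : ∀ e : {i : ι // i ≠ i₀}, e ≠ e₁ → σ e.val ≠ i₀ := by
      intro e he h
      apply he
      apply Subtype.ext
      show e.val = σ.symm i₀
      exact σ.injective (by rw [h, Equiv.apply_symm_apply])
    let prm : {i : ι // i ≠ i₀} → {i : ι // i ≠ i₀} :=
      fun e => if h : e = e₁ then ⟨σ i₀, h0⟩ else ⟨σ e.val, hse e h⟩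
    have hprm1 : prm e₁ = ⟨σ i₀, h0⟩ := dif_pos rfl
    have hprmne : ∀ (e) (h : e ≠ e₁), prm e = ⟨σ e.val, hse e h⟩ := fun e h => dif_neg h
    have hinj : Function.Injective prm := by
      intro x y hxy
      by_cases hx : x = e₁
      · by_cases hy : y = e₁
        · rw [hx, hy]
        · exfalso
          rw [hx, hprm1, hprmne y hy] at hxy
          have hv : σ i₀ = σ y.val := congrArg Subtype.val hxy
          exact y.2 (σ.injective hv).symm
      · by_cases hy : y = e₁
        · exfalso
          rw [hy, hprm1, hprmne x hx] at hxy
          have hv : σ x.val = σ i₀ := congrArg Subtype.val hxy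
          exact x.2 (σ.injective hv)
        · rw [hprmne x hx, hprmne y hy] at hxy
          exact Subtype.ext (σ.injective (congrArg Subtype.val hxy))
    let prm' : {i : ι // i ≠ i₀} ≃ {i : ι // i ≠ i₀} :=
      Equiv.ofBijective prm ((Finite.injective_iff_bijective).mp hinj)
    have heq : (fun u : {i : ι // i ≠ i₀} → ℝ => fun e : {i : ι // i ≠ i₀} =>
        (if h : σ e.val = i₀ then 0 else u ⟨σ e.val, h⟩) -
        (if h : σ i₀ = i₀ then 0 else u ⟨σ i₀, h⟩)) =
        (fun v : {i : ι // i ≠ i₀} → ℝ => fun i => (if i = e₁ then 0 else v i) - v e₁) ∘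
          (fun u => u ∘ prm') := by
      funext u e
      simp only [Function.comp_apply]
      rw [dif_neg h0]
      have hval : ∀ e', u (prm' e') = u (prm e') := fun _ => rfl
      congr 1
      · by_cases he : e = e₁
        · rw [if_pos he, dif_pos (show σ e.val = i₀ by rw [he]; exact Equiv.apply_symm_apply σ i₀)]
        · rw [if_neg he, dif_neg (hse e he), hval, hprmne e he]
      · rw [hval, hprm1]
    have hm1 : Measurable (fun v : {i : ι // i ≠ i₀} → ℝ =>
        fun i => (if i = e₁ then 0 else v i) - v e₁) := by
      apply measurable_pi_lambda
      intro i
      by_cases hi : i = e₁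
      · simp only [if_pos hi]
        exact measurable_const.sub (measurable_pi_apply _)
      · simp only [if_neg hi]
        exact (measurable_pi_apply _).sub (measurable_pi_apply _)
    have hm2 : Measurable (fun u : {i : ι // i ≠ i₀} → ℝ => u ∘ prm') := by
      apply measurable_pi_lambda
      intro i
      exact measurable_pi_apply _
    rw [heq, ← Measure.map_map hm1 hm2, map_comp_perm, map_shear_neg]

lemma map_T_pi (σ : ι ≃ ι) (i₀ : ι) :
    Measure.map (fun x : ι → ℝ => fun i => x (σ i) / x (σ i₀))
      (Measure.pi fun i => if i = i₀ then Measure.dirac (1 : ℝ) else ERRWGraph.logMeasure) =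
      Measure.pi fun i => if i = i₀ then Measure.dirac (1 : ℝ) else ERRWGraph.logMeasure := by
  classical
  have hT : Measurable (fun x : ι → ℝ => fun i => x (σ i) / x (σ i₀)) := by
    apply measurable_pi_lambda
    intro i
    exact (measurable_pi_apply _).div (measurable_pi_apply _)
  set L : ({i : ι // i ≠ i₀} → ℝ) → ({i : ι // i ≠ i₀} → ℝ) :=
    fun u => fun e : {i : ι // i ≠ i₀} =>
      (if h : σ e.val = i₀ then 0 else u ⟨σ e.val, h⟩) -
      (if h : σ i₀ = i₀ then 0 else u ⟨σ i₀, h⟩) with hLdef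
  have hLm : Measurable L := by
    apply measurable_pi_lambda
    intro e
    apply Measurable.sub
    · by_cases h : σ e.val = i₀
      · simp only [dif_pos h]; exact measurable_const
      · simp only [dif_neg h]; exact measurable_pi_apply _
    · by_cases h : σ i₀ = i₀
      · simp only [dif_pos h]; exact measurable_const
      · simp only [dif_neg h]; exact measurable_pi_apply _
  have hcomp : (fun x : ι → ℝ => fun i => x (σ i) / x (σ i₀)) ∘ (Psi i₀) = (Psi i₀) ∘ L := by
    funext u
    funext i
    simp only [Function.comp_apply]
    have hPsic : ∀ i', Psi i₀ u i' =
        Real.exp (if h : i' = i₀ then 0 else u ⟨i', h⟩) := by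
      intro i'
      by_cases h : i' = i₀
      · rw [Psi, dif_pos h, dif_pos h, Real.exp_zero]
      · rw [Psi, dif_neg h, dif_neg h]
    rw [hPsic, hPsic, ← Real.exp_sub]
    by_cases hi : i = i₀
    · subst hi
      rw [sub_self, Real.exp_zero, Psi, dif_pos rfl]
    · rw [Psi, dif_neg hi]
  rw [← map_Psi i₀, Measure.map_map hT (measurable_Psi i₀), hcomp,
    ← Measure.map_map (measurable_Psi i₀) hLm, map_L, map_Psi]

end PiLemmas

lemma map_withDensity_comp {α β : Type*} [MeasurableSpace α] [MeasurableSpace β]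
    (μ : Measure α) {f : α → β} {g : β → ℝ≥0∞} (hf : Measurable f) (hg : Measurable g) :
    Measure.map f (μ.withDensity (g ∘ f)) = (Measure.map f μ).withDensity g := by
  ext s hs
  rw [Measure.map_apply hf hs, withDensity_apply _ (hf hs), withDensity_apply _ hs,
    MeasureTheory.setLIntegral_map hs hg hf]
  rfl

end

end InterpSymAux

namespace InterpSymAux

open ERRWGraph MeasureTheory

noncomputable section GraphPart

variable {V : Type*} [Fintype V] [DecidableEq V]

lemma isTree_map_of_isTree (f : V ≃ V) (S : Set (Sym2 V))
    (h : (SimpleGraph.fromEdgeSet S).IsTree) :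
    (SimpleGraph.fromEdgeSet (Sym2.map f '' S)).IsTree := by
  classical
  let hiso : SimpleGraph.fromEdgeSet S ≃g SimpleGraph.fromEdgeSet (Sym2.map f '' S) :=
    { toEquiv := f
      map_rel_iff' := by
        intro u v
        rw [SimpleGraph.fromEdgeSet_adj, SimpleGraph.fromEdgeSet_adj]
        have h1 : s((f : V → V) u, (f : V → V) v) = Sym2.map f s(u, v) :=
          (Sym2.map_pair_eq f u v).symm
        rw [h1, (Sym2.map.injective f.injective).mem_set_image, f.injective.ne_iff] }
  refine ⟨(hiso.connected_iff).mp h.isConnected, ?_⟩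
  intro v c hc
  exact h.IsAcyclic (c.map hiso.symm.toHom)
    ((SimpleGraph.Walk.map_isCycle_iff_of_injective hiso.symm.injective).mpr hc)

lemma isTree_map_iff (f : V ≃ V) (S : Set (Sym2 V)) :
    (SimpleGraph.fromEdgeSet (Sym2.map f '' S)).IsTree ↔
      (SimpleGraph.fromEdgeSet S).IsTree := by
  constructor
  · intro h
    have h2 := isTree_map_of_isTree f.symm _ h
    have himg : Sym2.map f.symm '' (Sym2.map f '' S) = S := by
      rw [Set.image_image]
      have hid : ∀ z : Sym2 V, Sym2.map f.symm (Sym2.map f z) = z := by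
        intro z
        rw [Sym2.map_map]
        have hcomp : (⇑f.symm ∘ ⇑f) = id := Equiv.symm_comp_self f
        rw [hcomp, Sym2.map_id, id_eq]
      calc (fun z => Sym2.map (⇑f.symm) (Sym2.map (⇑f) z)) '' S
          = (fun z => z) '' S := by
            apply Set.image_congr
            intro z _
            exact hid z
        _ = S := Set.image_id S
    rwa [himg] at h2
  · exact isTree_map_of_isTree f S

variable (G : SimpleGraph V) [Fintype G.edgeSet]

lemma vwt_smul (c : ℝ) (x : G.edgeSet → ℝ) (v : V) :
    vwt G (fun e => c * x e) v = c * vwt G x v := by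
  unfold ERRWGraph.vwt
  rw [Finset.mul_sum]
  refine Finset.sum_congr rfl fun e _ => ?_
  by_cases h : v ∈ (e : Sym2 V)
  · rw [if_pos h, if_pos h]
  · rw [if_neg h, if_neg h, mul_zero]

lemma vwt_nonneg (x : G.edgeSet → ℝ) (hx : ∀ e, 0 ≤ x e) (v : V) : 0 ≤ vwt G x v := by
  refine Finset.sum_nonneg fun e _ => ?_
  by_cases h : v ∈ (e : Sym2 V)
  · rw [if_pos h]; exact hx e
  · rw [if_neg h]

lemma measurable_vwt (v : V) : Measurable (fun x : G.edgeSet → ℝ => vwt G x v) := by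
  apply Finset.measurable_sum
  intro e _
  by_cases h : v ∈ (e : Sym2 V)
  · simp only [if_pos h]; exact measurable_pi_apply e
  · simp only [if_neg h]; exact measurable_const

lemma measurable_Phi (a : Sym2 V → ℝ) (v : V) : Measurable (Phi G a v) := by
  unfold ERRWGraph.Phi
  refine Measurable.mul (Measurable.mul (Measurable.mul ?_ ?_) ?_) ?_
  · exact Finset.measurable_prod _ fun e _ => (measurable_pi_apply e).pow measurable_const
  · exact (measurable_vwt G v).pow measurable_const
  · exact Finset.measurable_prod _ fun w _ => (measurable_vwt G w).pow measurable_const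
  · have h5 : Measurable (treeSum G) := by
      unfold ERRWGraph.treeSum
      refine Finset.measurable_sum _ fun T _ => ?_
      by_cases h : IsSpanningTree G T
      · simp only [if_pos h]
        exact Finset.measurable_prod _ fun e _ => measurable_pi_apply e
      · simp only [if_neg h]; exact measurable_const
    exact h5.sqrt

lemma sum_mem_edge (a : Sym2 V → ℝ) (e : G.edgeSet) :
    (∑ v : V, if v ∈ (e : Sym2 V) then a (e : Sym2 V) else 0) = 2 * a (e : Sym2 V) := by
  obtain ⟨z, hz⟩ := e
  revert hz
  refine Sym2.ind (fun u w => ?_) z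
  intro hz
  show (∑ v : V, if v ∈ s(u, w) then a s(u, w) else 0) = 2 * a s(u, w)
  have hne : u ≠ w := (G.mem_edgeSet.mp hz).ne
  have hfilter : Finset.univ.filter (fun v => v ∈ s(u, w)) = {u, w} := by
    ext v
    simp [Sym2.mem_iff]
  rw [← Finset.sum_filter, hfilter, Finset.sum_pair hne]
  ring

lemma card_of_isST (T : Finset G.edgeSet) (hT : IsSpanningTree G T) :
    T.card + 1 = Fintype.card V := by
  classical
  haveI : Fintype ((SimpleGraph.fromEdgeSet (Subtype.val '' (T : Set G.edgeSet))).edgeSet) :=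
    Fintype.ofFinite _
  have hT' : (SimpleGraph.fromEdgeSet (Subtype.val '' (T : Set G.edgeSet))).IsTree := hT
  have h := hT'.card_edgeFinset
  have hes : (SimpleGraph.fromEdgeSet (Subtype.val '' (T : Set G.edgeSet))).edgeSet
      = Subtype.val '' (T : Set G.edgeSet) := by
    rw [SimpleGraph.edgeSet_fromEdgeSet]
    ext z
    simp only [Set.mem_diff, Set.mem_setOf_eq]
    constructor
    · exact fun hh => hh.1
    · intro hh
      refine ⟨hh, ?_⟩
      obtain ⟨e, heT, rfl⟩ := hh
      exact G.not_isDiag_of_mem_edgeSet e.2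
  have hfin : (SimpleGraph.fromEdgeSet (Subtype.val '' (T : Set G.edgeSet))).edgeFinset
      = T.image Subtype.val := by
    apply Finset.coe_injective
    rw [SimpleGraph.coe_edgeFinset, hes, Finset.coe_image]
  rw [hfin, Finset.card_image_of_injective _ Subtype.val_injective] at h
  exact h

lemma Phi_smul (a : Sym2 V → ℝ) (v₀ : V) (c : ℝ) (hc : 0 < c) (x : G.edgeSet → ℝ)
    (hx : ∀ e, 0 ≤ x e) :
    Phi G a v₀ (fun e => c * x e) = Phi G a v₀ x := by
  classical
  set n := Fintype.card V with hn
  have hn1 : 1 ≤ n := Fintype.card_pos_iff.mpr ⟨v₀⟩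
  have htree : treeSum G (fun e => c * x e) = c ^ (n - 1) * treeSum G x := by
    unfold ERRWGraph.treeSum
    rw [Finset.mul_sum]
    refine Finset.sum_congr rfl fun T _ => ?_
    by_cases hT : IsSpanningTree G T
    · rw [if_pos hT, if_pos hT, Finset.prod_mul_distrib, Finset.prod_const]
      have hcard : T.card = n - 1 := by
        have := card_of_isST G T hT
        omega
      rw [hcard]
    · rw [if_neg hT, if_neg hT, mul_zero]
  have hsumtot : avwt G a v₀ + ∑ v ∈ Finset.univ.erase v₀, avwt G a v
      = 2 * ∑ e : G.edgeSet, a (e : Sym2 V) := by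
    rw [Finset.add_sum_erase Finset.univ _ (Finset.mem_univ v₀)]
    unfold ERRWGraph.avwt
    rw [Finset.sum_comm, Finset.mul_sum]
    exact Finset.sum_congr rfl fun e _ => sum_mem_edge G a e
  have hcard2 : ((Finset.univ.erase v₀).card : ℝ) = (n : ℝ) - 1 := by
    rw [Finset.card_erase_of_mem (Finset.mem_univ v₀), Finset.card_univ, ← hn,
      Nat.cast_sub hn1, Nat.cast_one]
  have hs3 : (∑ v ∈ Finset.univ.erase v₀, (-(avwt G a v + 1) / 2))
      = -(∑ v ∈ Finset.univ.erase v₀, avwt G a v) / 2 - ((n : ℝ) - 1) / 2 := by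
    calc ∑ v ∈ Finset.univ.erase v₀, (-(avwt G a v + 1) / 2)
        = ∑ v ∈ Finset.univ.erase v₀, (-(avwt G a v) / 2 + (-1 / 2)) :=
          Finset.sum_congr rfl fun v _ => by ring
      _ = (∑ v ∈ Finset.univ.erase v₀, -(avwt G a v) / 2) +
          ((Finset.univ.erase v₀).card : ℝ) * (-1 / 2) := by
          rw [Finset.sum_add_distrib, Finset.sum_const, nsmul_eq_mul]
      _ = -(∑ v ∈ Finset.univ.erase v₀, avwt G a v) / 2 - ((n : ℝ) - 1) / 2 := by
          rw [hcard2, ← Finset.sum_div, Finset.sum_neg_distrib]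
          ring
  have hexp0 : (∑ e : G.edgeSet, a (e : Sym2 V)) + (-avwt G a v₀ / 2) +
      (∑ v ∈ Finset.univ.erase v₀, (-(avwt G a v + 1) / 2)) + ((n : ℝ) - 1) / 2 = 0 := by
    rw [hs3]
    linarith [hsumtot]
  have hvnn : ∀ v, 0 ≤ vwt G x v := vwt_nonneg G x hx
  have hprod1 : (∏ e : G.edgeSet, (c * x e) ^ a (e : Sym2 V))
      = c ^ (∑ e : G.edgeSet, a (e : Sym2 V)) * ∏ e : G.edgeSet, x e ^ a (e : Sym2 V) := by
    rw [Real.rpow_sum_of_pos hc, ← Finset.prod_mul_distrib]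
    exact Finset.prod_congr rfl fun e _ => Real.mul_rpow hc.le (hx e)
  have h2 : (c * vwt G x v₀) ^ (-avwt G a v₀ / 2)
      = c ^ (-avwt G a v₀ / 2) * vwt G x v₀ ^ (-avwt G a v₀ / 2) :=
    Real.mul_rpow hc.le (hvnn v₀)
  have h3 : (∏ v ∈ Finset.univ.erase v₀, (c * vwt G x v) ^ (-(avwt G a v + 1) / 2))
      = c ^ (∑ v ∈ Finset.univ.erase v₀, (-(avwt G a v + 1) / 2)) *
        ∏ v ∈ Finset.univ.erase v₀, vwt G x v ^ (-(avwt G a v + 1) / 2) := by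
    rw [Real.rpow_sum_of_pos hc, ← Finset.prod_mul_distrib]
    exact Finset.prod_congr rfl fun v _ => Real.mul_rpow hc.le (hvnn v)
  have h4 : Real.sqrt (c ^ (n - 1) * treeSum G x)
      = c ^ (((n : ℝ) - 1) / 2) * Real.sqrt (treeSum G x) := by
    rw [Real.sqrt_mul (pow_nonneg hc.le _)]
    congr 1
    rw [← Real.rpow_natCast c (n - 1), Real.sqrt_eq_rpow, ← Real.rpow_mul hc.le,
      Nat.cast_sub hn1, Nat.cast_one]
    ring_nf
  unfold ERRWGraph.Phi
  simp only [vwt_smul]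
  rw [htree, hprod1, h2, h3, h4]
  rw [show (c ^ (∑ e : G.edgeSet, a (e : Sym2 V)) * (∏ e : G.edgeSet, x e ^ a (e : Sym2 V))) *
      (c ^ (-avwt G a v₀ / 2) * vwt G x v₀ ^ (-avwt G a v₀ / 2)) *
      (c ^ (∑ v ∈ Finset.univ.erase v₀, (-(avwt G a v + 1) / 2)) *
        ∏ v ∈ Finset.univ.erase v₀, vwt G x v ^ (-(avwt G a v + 1) / 2)) *
      (c ^ (((n : ℝ) - 1) / 2) * Real.sqrt (treeSum G x))
      = (c ^ (∑ e : G.edgeSet, a (e : Sym2 V)) * c ^ (-avwt G a v₀ / 2) *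
          c ^ (∑ v ∈ Finset.univ.erase v₀, (-(avwt G a v + 1) / 2)) *
          c ^ (((n : ℝ) - 1) / 2)) *
        ((∏ e : G.edgeSet, x e ^ a (e : Sym2 V)) * vwt G x v₀ ^ (-avwt G a v₀ / 2) *
          (∏ v ∈ Finset.univ.erase v₀, vwt G x v ^ (-(avwt G a v + 1) / 2)) *
          Real.sqrt (treeSum G x)) from by ring]
  rw [← Real.rpow_add hc, ← Real.rpow_add hc, ← Real.rpow_add hc, hexp0, Real.rpow_zero,
    one_mul]

lemma Phi_comp (a : Sym2 V → ℝ) (f : V → V) (hfinj : Function.Injective f)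
    (hfsurj : Function.Surjective f) (σ : G.edgeSet ≃ G.edgeSet)
    (hmemσ : ∀ (v : V) (e : G.edgeSet), v ∈ (e : Sym2 V) ↔ f v ∈ ((σ e : G.edgeSet) : Sym2 V))
    (haσ : ∀ e : G.edgeSet, a ((σ e : G.edgeSet) : Sym2 V) = a (e : Sym2 V))
    (hIsST : ∀ T : Finset G.edgeSet,
      IsSpanningTree G (T.map σ.toEmbedding) ↔ IsSpanningTree G T)
    (x : G.edgeSet → ℝ) (v : V) :
    Phi G a v (fun e => x (σ e)) = Phi G a (f v) x := by
  classical
  have hvwt : ∀ w, vwt G (fun e => x (σ e)) w = vwt G x (f w) := by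
    intro w
    unfold ERRWGraph.vwt
    refine Fintype.sum_equiv σ _ _ fun e => ?_
    by_cases h : w ∈ (e : Sym2 V)
    · rw [if_pos h, if_pos ((hmemσ w e).mp h)]
    · rw [if_neg h, if_neg fun hh => h ((hmemσ w e).mpr hh)]
  have havwt : ∀ w, avwt G a (f w) = avwt G a w := by
    intro w
    unfold ERRWGraph.avwt
    refine (Fintype.sum_equiv σ _ _ fun e => ?_).symm
    by_cases h : w ∈ (e : Sym2 V)
    · rw [if_pos h, if_pos ((hmemσ w e).mp h)]
      exact (haσ e).symm
    · rw [if_neg h, if_neg fun hh => h ((hmemσ w e).mpr hh)]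
  have hprod1 : (∏ e : G.edgeSet, x (σ e) ^ a (e : Sym2 V))
      = ∏ e : G.edgeSet, x e ^ a (e : Sym2 V) := by
    refine Fintype.prod_equiv σ _ _ fun e => ?_
    rw [haσ]
  have htree : treeSum G (fun e => x (σ e)) = treeSum G x := by
    unfold ERRWGraph.treeSum
    refine Fintype.sum_equiv (Equiv.finsetCongr σ) _ _ fun T => ?_
    rw [Equiv.finsetCongr_apply]
    by_cases h : IsSpanningTree G T
    · rw [if_pos h, if_pos ((hIsST T).mpr h), Finset.prod_map]
      rfl
    · rw [if_neg h, if_neg fun hh => h ((hIsST T).mp hh)]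
  have herase : (∏ w ∈ Finset.univ.erase v, vwt G x (f w) ^ (-(avwt G a w + 1) / 2))
      = ∏ w ∈ Finset.univ.erase (f v), vwt G x w ^ (-(avwt G a w + 1) / 2) := by
    calc ∏ w ∈ Finset.univ.erase v, vwt G x (f w) ^ (-(avwt G a w + 1) / 2)
        = ∏ w ∈ Finset.univ.erase v, vwt G x (f w) ^ (-(avwt G a (f w) + 1) / 2) := by
          refine Finset.prod_congr rfl fun w _ => ?_
          rw [havwt w]
      _ = ∏ w ∈ (Finset.univ.erase v).image f, vwt G x w ^ (-(avwt G a w + 1) / 2) :=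
          (Finset.prod_image (f := fun w => vwt G x w ^ (-(avwt G a w + 1) / 2))
            (fun b _ c _ h => hfinj h)).symm
      _ = ∏ w ∈ Finset.univ.erase (f v), vwt G x w ^ (-(avwt G a w + 1) / 2) := by
          rw [Finset.image_erase hfinj, Finset.image_univ_of_surjective hfsurj]
  unfold ERRWGraph.Phi
  simp only [hvwt]
  rw [hprod1, htree, havwt v, herase]

end GraphPart

end InterpSymAux

open ERRWGraph in
/-- Lemma 4.4 (Symmetry property of `ℙ_{v₀,v₁,e₀}`): if some automorphism of `(G,a)`
swaps `v₀` and `v₁`, then `x_{v₀}/x_{v₁}` and `x_{v₁}/x_{v₀}` have the same law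
under `ℙ_{v₀,v₁,e₀}`. -/
theorem interp_symmetry {V : Type*} [Fintype V] [DecidableEq V]
    (G : SimpleGraph V) [Fintype G.edgeSet] (hG : G.Connected)
    (a : Sym2 V → ℝ) (ha : ∀ e ∈ G.edgeSet, 0 < a e) (v₀ v₁ : V)
    (hf : ∃ f : V → V, IsAut G a f ∧ f v₀ = v₁ ∧ f v₁ = v₀)
    (e₀ : G.edgeSet)
    (hz0 : z G a v₀ e₀ ≠ ⊤) (hz1 : z G a v₁ e₀ ≠ ⊤) :
    Measure.map (fun x => vwt G x v₀ / vwt G x v₁) (Pm G a v₀ v₁ e₀) =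
      Measure.map (fun x => vwt G x v₁ / vwt G x v₀) (Pm G a v₀ v₁ e₀) := by
  classical
  obtain ⟨f, ⟨hfb, hfadj, hfwt⟩, hf0, hf1⟩ := hf
  -- the edge permutation induced by `f`
  have hmem : ∀ e : G.edgeSet, Sym2.map f (e : Sym2 V) ∈ G.edgeSet := by
    rintro ⟨z, hz⟩
    revert hz
    refine Sym2.ind (fun u w => ?_) z
    intro hz
    show Sym2.map f s(u, w) ∈ G.edgeSet
    rw [Sym2.map_pair_eq, SimpleGraph.mem_edgeSet]
    rw [SimpleGraph.mem_edgeSet] at hz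
    exact (hfadj u w).mpr hz
  set σ0 : G.edgeSet → G.edgeSet := fun e => ⟨Sym2.map f (e : Sym2 V), hmem e⟩ with hσ0
  have hσ0inj : Function.Injective σ0 := by
    intro e e' h
    exact Subtype.ext (Sym2.map.injective hfb.1 (congrArg Subtype.val h))
  set σ : G.edgeSet ≃ G.edgeSet :=
    Equiv.ofBijective σ0 ((Finite.injective_iff_bijective).mp hσ0inj) with hσdef
  have hσval : ∀ e : G.edgeSet, ((σ e : G.edgeSet) : Sym2 V) = Sym2.map f (e : Sym2 V) :=
    fun e => rfl
  have haσ : ∀ e : G.edgeSet, a ((σ e : G.edgeSet) : Sym2 V) = a (e : Sym2 V) := by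
    rintro ⟨z, hz⟩
    rw [hσval]
    revert hz
    refine Sym2.ind (fun u w => ?_) z
    intro hz
    show a (Sym2.map f s(u, w)) = a s(u, w)
    rw [Sym2.map_pair_eq]
    exact hfwt u w (G.mem_edgeSet.mp hz)
  have hmemσ : ∀ (v : V) (e : G.edgeSet),
      v ∈ (e : Sym2 V) ↔ f v ∈ ((σ e : G.edgeSet) : Sym2 V) := by
    intro v e
    rw [hσval, Sym2.mem_map]
    constructor
    · exact fun h => ⟨v, h, rfl⟩
    · rintro ⟨w, hw, hwv⟩
      rwa [hfb.1 hwv] at hw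
  -- spanning trees are permuted
  let fE : V ≃ V := Equiv.ofBijective f hfb
  have hIsST : ∀ T : Finset G.edgeSet,
      IsSpanningTree G (T.map σ.toEmbedding) ↔ IsSpanningTree G T := by
    intro T
    show (SimpleGraph.fromEdgeSet _).IsTree ↔ (SimpleGraph.fromEdgeSet _).IsTree
    have himg : (Subtype.val '' ((T.map σ.toEmbedding : Finset G.edgeSet) : Set G.edgeSet))
        = Sym2.map fE '' (Subtype.val '' (T : Set G.edgeSet)) := by
      rw [Finset.coe_map, Set.image_image, Set.image_image]
      rfl
    rw [himg]
    exact InterpSymAux.isTree_map_iff fE _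
  -- the measure-preserving transformation
  set T : (G.edgeSet → ℝ) → (G.edgeSet → ℝ) := fun x e => x (σ e) / x (σ e₀) with hTdef
  have hTm : Measurable T :=
    measurable_pi_lambda _ fun e => (measurable_pi_apply _).div (measurable_pi_apply _)
  have hK1 : Measure.map T (rho G e₀) = rho G e₀ := by
    show Measure.map (fun x : G.edgeSet → ℝ => fun e => x (σ e) / x (σ e₀))
        (Measure.pi fun e => if e = e₀ then Measure.dirac (1 : ℝ) else logMeasure)
      = Measure.pi fun e => if e = e₀ then Measure.dirac (1 : ℝ) else logMeasure
    exact InterpSymAux.map_T_pi σ e₀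
  haveI hsf : ∀ e : G.edgeSet, SigmaFinite (if e = e₀ then Measure.dirac (1 : ℝ)
      else logMeasure) := by
    intro e
    by_cases h : e = e₀
    · rw [if_pos h]; infer_instance
    · rw [if_neg h]; infer_instance
  -- almost sure positivity
  have hpos : ∀ᵐ x ∂(rho G e₀), ∀ e, 0 < x e := by
    rw [ae_iff]
    have hsub : {x : G.edgeSet → ℝ | ¬∀ e, 0 < x e} ⊆
        ⋃ e : G.edgeSet, {x : G.edgeSet → ℝ | x e ≤ 0} := by
      intro x hx
      push_neg at hx
      obtain ⟨e, he⟩ := hx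
      exact Set.mem_iUnion.mpr ⟨e, he⟩
    refine measure_mono_null hsub (measure_iUnion_null fun e => ?_)
    have hBset : {x : G.edgeSet → ℝ | x e ≤ 0} =
        Set.pi Set.univ (fun e' => if e' = e then Set.Iic (0 : ℝ) else Set.univ) := by
      ext x
      simp only [Set.mem_setOf_eq, Set.mem_pi, Set.mem_univ, forall_true_left]
      constructor
      · intro h e'
        by_cases he' : e' = e
        · rw [if_pos he', he']
          exact h
        · rw [if_neg he']
          trivial
      · intro h
        have h2 := h e
        rwa [if_pos rfl] at h2
    rw [hBset]
    show (Measure.pi fun e' => if e' = e₀ then Measure.dirac (1 : ℝ) else logMeasure) _ = 0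
    rw [Measure.pi_pi]
    refine Finset.prod_eq_zero (Finset.mem_univ e) ?_
    show (if e = e₀ then Measure.dirac (1 : ℝ) else logMeasure)
        (if e = e then Set.Iic (0 : ℝ) else Set.univ) = 0
    rw [if_pos rfl]
    by_cases he : e = e₀
    · rw [if_pos he, Measure.dirac_apply' _ measurableSet_Iic,
        Set.indicator_of_notMem (by norm_num)]
    · rw [if_neg he]
      unfold logMeasure
      refine withDensity_absolutelyContinuous _ _ ?_
      rw [Measure.restrict_apply' measurableSet_Ioi]
      have : Set.Iic (0 : ℝ) ∩ Set.Ioi (0 : ℝ) = ∅ :=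
        Set.eq_empty_iff_forall_notMem.mpr fun x hx => absurd (Set.mem_Ioi.mp hx.2) (not_lt.mpr hx.1)
      rw [this, measure_empty]
  -- invariance of Phi
  have hPhiT : ∀ (x : G.edgeSet → ℝ), (∀ e, 0 < x e) → ∀ v : V,
      Phi G a v (T x) = Phi G a (f v) x := by
    intro x hx v
    have hTx : T x = fun e => (x (σ e₀))⁻¹ * ((fun e' => x (σ e')) e) := by
      funext e
      rw [hTdef]
      show x (σ e) / x (σ e₀) = (x (σ e₀))⁻¹ * x (σ e)
      rw [div_eq_mul_inv, mul_comm]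
    rw [hTx,
      InterpSymAux.Phi_smul G a v (x (σ e₀))⁻¹ (inv_pos.mpr (hx (σ e₀)))
        (fun e' => x (σ e')) (fun e' => (hx (σ e')).le),
      InterpSymAux.Phi_comp G a f hfb.1 hfb.2 σ hmemσ haσ hIsST x v]
  -- invariance of the interpolated density
  have hDm : Measurable (interpDens G a v₀ v₁ e₀) := by
    unfold ERRWGraph.interpDens
    refine Measurable.pow ?_ measurable_const
    refine Measurable.mul ?_ ?_
    · exact (ENNReal.measurable_ofReal.comp (InterpSymAux.measurable_Phi G a v₀)).div
        measurable_const
    · exact (ENNReal.measurable_ofReal.comp (InterpSymAux.measurable_Phi G a v₁)).div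
        measurable_const
  have hDT : ∀ x, (∀ e, 0 < x e) →
      interpDens G a v₀ v₁ e₀ (T x) = interpDens G a v₀ v₁ e₀ x := by
    intro x hx
    unfold ERRWGraph.interpDens
    rw [hPhiT x hx v₀, hPhiT x hx v₁, hf0, hf1]
    congr 1
    rw [div_eq_mul_inv, div_eq_mul_inv, div_eq_mul_inv, div_eq_mul_inv]
    ring
  -- the interpolated measure is invariant
  have hPmT : Measure.map T (Pm G a v₀ v₁ e₀) = Pm G a v₀ v₁ e₀ := by
    unfold ERRWGraph.Pm
    rw [Measure.map_smul]
    congr 1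
    have hae : interpDens G a v₀ v₁ e₀ ∘ T =ᵐ[rho G e₀] interpDens G a v₀ v₁ e₀ := by
      filter_upwards [hpos] with x hx
      exact hDT x hx
    calc Measure.map T ((rho G e₀).withDensity (interpDens G a v₀ v₁ e₀))
        = Measure.map T ((rho G e₀).withDensity (interpDens G a v₀ v₁ e₀ ∘ T)) := by
          rw [withDensity_congr_ae hae]
      _ = (Measure.map T (rho G e₀)).withDensity (interpDens G a v₀ v₁ e₀) :=
          InterpSymAux.map_withDensity_comp _ hTm hDm
      _ = (rho G e₀).withDensity (interpDens G a v₀ v₁ e₀) := by rw [hK1]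
  have hPmac : Pm G a v₀ v₁ e₀ ≪ rho G e₀ := by
    unfold ERRWGraph.Pm
    refine Measure.AbsolutelyContinuous.mk fun s hs h0 => ?_
    have h1 : (rho G e₀).withDensity (interpDens G a v₀ v₁ e₀) s = 0 :=
      withDensity_absolutelyContinuous _ _ h0
    rw [Measure.smul_apply, h1, smul_zero]
  have hPmpos : ∀ᵐ x ∂(Pm G a v₀ v₁ e₀), ∀ e, 0 < x e :=
    Filter.Eventually.filter_mono hPmac.ae_le hpos
  -- conclude
  have hgm : Measurable (fun x : G.edgeSet → ℝ => vwt G x v₀ / vwt G x v₁) :=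
    (InterpSymAux.measurable_vwt G v₀).div (InterpSymAux.measurable_vwt G v₁)
  have hcomp : (fun x : G.edgeSet → ℝ => vwt G x v₀ / vwt G x v₁) ∘ T
      =ᵐ[Pm G a v₀ v₁ e₀] (fun x => vwt G x v₁ / vwt G x v₀) := by
    filter_upwards [hPmpos] with x hx
    show vwt G (T x) v₀ / vwt G (T x) v₁ = vwt G x v₁ / vwt G x v₀
    have hvwtc : ∀ w, vwt G (fun e => x (σ e)) w = vwt G x (f w) := by
      intro w
      unfold ERRWGraph.vwt
      refine Fintype.sum_equiv σ _ _ fun e => ?_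
      by_cases h : w ∈ (e : Sym2 V)
      · rw [if_pos h, if_pos ((hmemσ w e).mp h)]
      · rw [if_neg h, if_neg fun hh => h ((hmemσ w e).mpr hh)]
    have hT2 : ∀ v : V, vwt G (T x) v = (x (σ e₀))⁻¹ * vwt G x (f v) := by
      intro v
      have hTx : T x = fun e => (x (σ e₀))⁻¹ * ((fun e' => x (σ e')) e) := by
        funext e
        rw [hTdef]
        show x (σ e) / x (σ e₀) = (x (σ e₀))⁻¹ * x (σ e)
        rw [div_eq_mul_inv, mul_comm]
      rw [hTx, InterpSymAux.vwt_smul G _ _ v, hvwtc v]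
    rw [hT2 v₀, hT2 v₁, hf0, hf1,
      mul_div_mul_left _ _ (inv_ne_zero (ne_of_gt (hx (σ e₀))))]
  calc Measure.map (fun x => vwt G x v₀ / vwt G x v₁) (Pm G a v₀ v₁ e₀)
      = Measure.map (fun x => vwt G x v₀ / vwt G x v₁)
          (Measure.map T (Pm G a v₀ v₁ e₀)) := by rw [hPmT]
    _ = Measure.map ((fun x => vwt G x v₀ / vwt G x v₁) ∘ T) (Pm G a v₀ v₁ e₀) :=
        Measure.map_map hgm hTm
    _ = Measure.map (fun x => vwt G x v₁ / vwt G x v₀) (Pm G a v₀ v₁ e₀) :=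
        Measure.map_congr hcomp
end

section
/- Under Assumption 2.3 (with z_{v₀,e₀} and z_{v₁,e₀} finite), for every γ ∈ ℝ the relative entropy of Π^{γφ} with respect to ℙ_{v₀,v₁,e₀} is nonnegative and finite: 0 ≤ E_{Π^{γφ}}[ log( dΠ^{γφ}/dℙ_{v₀,v₁,e₀} ) ] < ∞; equivalently, 0 ≤ ∫_{Ω_{e₀}} f_γ dℙ_{v₀,v₁,e₀} < ∞, where f_γ(x) := γ(a_{v₁}/2 + 1/4) − γ∑_{e∈E} φ(e)a_e + ∑_{v∈V∖{v₀,v₁}} ((a_v+1)/2)·log(x_v^{(γφ)}/x_v) − (1/2)·log( ∑_{T∈𝒯} Y_T^{(γφ)}(x) / ∑_{T∈𝒯} Y_T(x) ). -/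
open MeasureTheory
open scoped ENNReal Classical

namespace ERRWGraph
noncomputable section
variable {V : Type*} [Fintype V] [DecidableEq V] (G : SimpleGraph V) [Fintype G.edgeSet]
set_option linter.unusedSectionVars false

instance : SigmaFinite logMeasure := by
  unfold logMeasure
  exact SigmaFinite.withDensity_ofReal _

lemma map_withDensity_equiv {α β : Type*} [MeasurableSpace α] [MeasurableSpace β]
    (T : α ≃ᵐ β) (μ : Measure α) {f : α → ℝ≥0∞} (hf : Measurable f) :
    (μ.withDensity f).map T = (μ.map T).withDensity (fun y => f (T.symm y)) := by
  ext s hs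
  rw [Measure.map_apply T.measurable hs, withDensity_apply _ (T.measurable hs),
    withDensity_apply _ hs,
    setLIntegral_map hs (show Measurable fun y => f (T.symm y) by exact hf.comp T.symm.measurable) T.measurable]
  refine setLIntegral_congr_fun (T.measurable hs) ?_
  intro x _
  simp

lemma logMeasure_map_mul {c : ℝ} (hc : 0 < c) :
    Measure.map (fun x => c * x) logMeasure = logMeasure := by
  have hc' : c ≠ 0 := hc.ne'
  set T : ℝ ≃ᵐ ℝ := (Homeomorph.mulLeft₀ c hc').toMeasurableEquiv with hT
  have hTfun : (T : ℝ → ℝ) = fun x => c * x := rfl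
  have hTsymm : (T.symm : ℝ → ℝ) = fun y => c⁻¹ * y := rfl
  have hpre : (fun x : ℝ => c * x) ⁻¹' (Set.Ioi 0) = Set.Ioi 0 := by
    ext x
    simp only [Set.mem_preimage, Set.mem_Ioi]
    constructor
    · intro h; nlinarith
    · intro h; positivity
  show Measure.map (⇑T) ((volume.restrict (Set.Ioi (0:ℝ))).withDensity
      fun x => ENNReal.ofReal (1 / x)) = logMeasure
  rw [map_withDensity_equiv T _ (by fun_prop)]
  have h1 : Measure.map (⇑T) (volume.restrict (Set.Ioi 0)) =
      (ENNReal.ofReal |c⁻¹| • volume).restrict (Set.Ioi 0) := by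
    conv_lhs => rw [show (Set.Ioi (0:ℝ)) = ⇑T ⁻¹' Set.Ioi 0 by rw [hTfun, hpre]]
    rw [← Measure.restrict_map T.measurable measurableSet_Ioi, hTfun,
      Real.map_volume_mul_left hc']
  rw [h1, Measure.restrict_smul, withDensity_smul_measure,
    ← withDensity_smul _ (show Measurable fun y : ℝ => ENNReal.ofReal (1 / (T.symm y)) by
      have : Measurable fun y : ℝ => (T.symm y : ℝ) := T.symm.measurable
      fun_prop)]
  unfold logMeasure
  congr 1
  funext y
  show ENNReal.ofReal |c⁻¹| * ENNReal.ofReal (1 / (T.symm y)) = ENNReal.ofReal (1 / y)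
  have hsy : (T.symm y : ℝ) = c⁻¹ * y := rfl
  rw [hsy, abs_of_pos (by positivity), ← ENNReal.ofReal_mul (by positivity)]
  congr 1
  rcases eq_or_ne y 0 with rfl | hy
  · simp
  · field_simp

lemma measurable_Xi (φ : Sym2 V → ℝ) (γ : ℝ) : Measurable (Xi G φ γ) :=
  measurable_pi_lambda _ fun e => (measurable_pi_apply e).const_mul _

lemma Xi_Xi (φ : Sym2 V → ℝ) (γ γ' : ℝ) (x : G.edgeSet → ℝ) :
    Xi G φ γ' (Xi G φ γ x) = Xi G φ (γ' + γ) x := by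
  funext e
  simp only [Xi, ← mul_assoc, ← Real.exp_add]
  ring_nf

lemma Xi_zero (φ : Sym2 V → ℝ) (x : G.edgeSet → ℝ) : Xi G φ 0 x = x := by
  funext e; simp [Xi]

instance sigmaFinite_rho_factor (e₀ e : G.edgeSet) :
    SigmaFinite (if e = e₀ then Measure.dirac (1:ℝ) else logMeasure) := by
  split <;> infer_instance

lemma map_Xi_rho (φ : Sym2 V → ℝ) (γ : ℝ) (e₀ : G.edgeSet)
    (he₀ : φ (e₀ : Sym2 V) = 0) :
    Measure.map (Xi G φ γ) (rho G e₀) = rho G e₀ := by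
  refine (Measure.pi_eq fun s hs => ?_).symm
  rw [Measure.map_apply (measurable_Xi G φ γ) (MeasurableSet.univ_pi hs)]
  have hpre : Xi G φ γ ⁻¹' Set.pi Set.univ s =
      Set.pi Set.univ (fun e => (fun t => Real.exp (γ * φ ((e : G.edgeSet) : Sym2 V)) * t) ⁻¹' s e) := by
    ext x; simp [Xi, Set.mem_pi]
  rw [hpre, show rho G e₀ = Measure.pi _ from rfl, Measure.pi_pi]
  refine Finset.prod_congr rfl fun e _ => ?_
  by_cases he : e = e₀
  · subst he
    have h1 : (fun t : ℝ => Real.exp (γ * φ (e : Sym2 V)) * t) = id := by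
      funext t; rw [he₀]; simp
    rw [h1, Set.preimage_id]
  · simp only [if_neg he]
    rw [← Measure.map_apply (measurable_const_mul _) (hs e),
      logMeasure_map_mul (Real.exp_pos _)]

lemma rho_ae_pos (e₀ : G.edgeSet) : ∀ᵐ x ∂rho G e₀, ∀ e, 0 < x e := by
  rw [ae_iff]
  refine measure_mono_null (fun x hx => ?_)
    ((measure_iUnion_null_iff
      (s := fun e : G.edgeSet => Function.eval e ⁻¹' Set.Iic (0:ℝ))).mpr fun e => ?_)
  · simp only [Set.mem_setOf_eq, not_forall, not_lt] at hx
    obtain ⟨e, he⟩ := hx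
    exact Set.mem_iUnion.mpr ⟨e, he⟩
  · have h1 : (Function.eval e ⁻¹' Set.Iic (0:ℝ)) =
        Set.pi Set.univ (fun e' => if e' = e then Set.Iic (0:ℝ) else Set.univ) := by
      ext x
      simp only [Set.mem_preimage, Function.eval, Set.mem_pi, Set.mem_univ, forall_true_left]
      constructor
      · intro h e'
        split
        · next h' => subst h'; exact h
        · exact Set.mem_univ _
      · intro h
        have := h e
        simpa using this
    rw [h1, show rho G e₀ = Measure.pi _ from rfl, Measure.pi_pi]
    apply Finset.prod_eq_zero (Finset.mem_univ e)
    rw [if_pos rfl]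
    split
    · rw [Measure.dirac_apply' _ measurableSet_Iic]
      simp
    · show logMeasure (Set.Iic 0) = 0
      unfold logMeasure
      rw [withDensity_apply _ measurableSet_Iic,
        Measure.restrict_restrict measurableSet_Iic]
      have h2 : Set.Iic (0:ℝ) ∩ Set.Ioi 0 = ∅ := by
        ext x; simp only [Set.mem_inter_iff, Set.mem_Iic, Set.mem_Ioi, Set.mem_empty_iff_false,
          iff_false, not_and, not_lt]
        intro h; linarith
      rw [h2, Measure.restrict_empty, lintegral_zero_measure]

lemma measurable_vwt (v : V) : Measurable (fun x => vwt G x v) := by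
  unfold vwt
  exact Finset.measurable_sum _ fun e _ => by
    split
    · exact measurable_pi_apply e
    · exact measurable_const

lemma measurable_treeSum : Measurable (treeSum G) := by
  unfold treeSum
  exact Finset.measurable_sum _ fun T _ => by
    split
    · exact Finset.measurable_prod _ fun e _ => measurable_pi_apply e
    · exact measurable_const

lemma measurable_Phi (a : Sym2 V → ℝ) (v₀ : V) : Measurable (Phi G a v₀) := by
  unfold Phi
  refine Measurable.mul (Measurable.mul (Measurable.mul ?_ ?_) ?_) ?_
  · exact Finset.measurable_prod _ fun e _ => (measurable_pi_apply e).pow measurable_const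
  · exact (measurable_vwt G v₀).pow measurable_const
  · exact Finset.measurable_prod _ fun v _ => (measurable_vwt G v).pow measurable_const
  · exact (measurable_treeSum G).sqrt

lemma measurable_interpDens (a : Sym2 V → ℝ) (v₀ v₁ : V) (e₀ : G.edgeSet) :
    Measurable (interpDens G a v₀ v₁ e₀) := by
  unfold interpDens
  refine Measurable.pow ?_ measurable_const
  exact ((ENNReal.measurable_ofReal.comp (measurable_Phi G a v₀)).div measurable_const).mul
    ((ENNReal.measurable_ofReal.comp (measurable_Phi G a v₁)).div measurable_const)

lemma measurable_fgamma (a φ : Sym2 V → ℝ) (v₀ v₁ : V) (γ : ℝ) :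
    Measurable (fgamma G a φ v₀ v₁ γ) := by
  unfold fgamma
  refine Measurable.sub (Measurable.add (Measurable.sub measurable_const measurable_const) ?_) ?_
  · refine Finset.measurable_sum _ fun v _ => (measurable_const.mul ?_)
    exact (((measurable_vwt G v).comp (measurable_Xi G φ γ)).div (measurable_vwt G v)).log
  · exact measurable_const.mul
      (((measurable_treeSum G).comp (measurable_Xi G φ γ)).div (measurable_treeSum G)).log

lemma exists_mem_edge (hG : G.Connected) (e₀ : G.edgeSet) (v : V) :
    ∃ e : G.edgeSet, v ∈ (e : Sym2 V) := by
  obtain ⟨u, w, huw⟩ : ∃ u w, G.Adj u w := by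
    obtain ⟨e, he⟩ := e₀
    induction e using Sym2.ind with
    | _ u w => exact ⟨u, w, he⟩
  have h : ∃ u', G.Adj v u' := by
    by_cases hv : v = u
    · exact ⟨w, hv ▸ huw⟩
    · obtain ⟨walk⟩ := hG.preconnected v u
      cases walk with
      | nil => exact absurd rfl hv
      | cons h p => exact ⟨_, h⟩
  obtain ⟨u', hadj⟩ := h
  exact ⟨⟨s(v, u'), hadj⟩, by simp⟩

lemma vwt_pos {x : G.edgeSet → ℝ} (hx : ∀ e, 0 < x e) {v : V}
    (he : ∃ e : G.edgeSet, v ∈ (e : Sym2 V)) : 0 < vwt G x v := by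
  obtain ⟨e, he⟩ := he
  refine Finset.sum_pos' (fun e' _ => ?_) ⟨e, Finset.mem_univ e, ?_⟩
  · split
    · exact (hx e').le
    · exact le_refl 0
  · rw [if_pos he]; exact hx e

lemma treeSum_pos {x : G.edgeSet → ℝ} (hx : ∀ e, 0 < x e)
    (hT : ∃ T, IsSpanningTree G T) : 0 < treeSum G x := by
  obtain ⟨T, hT⟩ := hT
  refine Finset.sum_pos' (fun T' _ => ?_) ⟨T, Finset.mem_univ T, ?_⟩
  · split
    · exact (Finset.prod_pos fun e _ => hx e).le
    · exact le_refl 0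
  · rw [if_pos hT]; exact Finset.prod_pos fun e _ => hx e

lemma Phi_pos (a : Sym2 V → ℝ) (v₀ : V) {x : G.edgeSet → ℝ} (hx : ∀ e, 0 < x e)
    (hvp : ∀ v, 0 < vwt G x v) (hT : ∃ T, IsSpanningTree G T) :
    0 < Phi G a v₀ x := by
  unfold Phi
  have h1 : 0 < ∏ e : G.edgeSet, x e ^ a (e : Sym2 V) :=
    Finset.prod_pos fun e _ => Real.rpow_pos_of_pos (hx e) _
  have h2 : 0 < ∏ v ∈ Finset.univ.erase v₀, vwt G x v ^ (-(avwt G a v + 1) / 2) :=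
    Finset.prod_pos fun v _ => Real.rpow_pos_of_pos (hvp v) _
  have h3 := Real.rpow_pos_of_pos (hvp v₀) (-avwt G a v₀ / 2)
  have h4 := Real.sqrt_pos.mpr (treeSum_pos G hx hT)
  positivity

lemma exists_spanning_of_z_ne (a : Sym2 V → ℝ) (v : V) (e₀ : G.edgeSet)
    (hz : z G a v e₀ ≠ 0) : ∃ T, IsSpanningTree G T := by
  by_contra h
  push_neg at h
  apply hz
  unfold z
  have h0 : ∀ y : G.edgeSet → ℝ, Phi G a v y = 0 := by
    intro y
    unfold Phi treeSum
    rw [Finset.sum_eq_zero (fun T _ => if_neg (h T)), Real.sqrt_zero, mul_zero]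
  simp [h0]

lemma log_Phi_expand (a : Sym2 V → ℝ) (v₀ : V) {x : G.edgeSet → ℝ} (hx : ∀ e, 0 < x e)
    (hvp : ∀ v, 0 < vwt G x v) (ht : 0 < treeSum G x) :
    Real.log (Phi G a v₀ x) = (∑ e : G.edgeSet, a (e : Sym2 V) * Real.log (x e))
      + (-avwt G a v₀ / 2) * Real.log (vwt G x v₀)
      + (∑ v ∈ Finset.univ.erase v₀, (-(avwt G a v + 1) / 2) * Real.log (vwt G x v))
      + (1 / 2) * Real.log (treeSum G x) := by
  have h1 : 0 < ∏ e : G.edgeSet, x e ^ a (e : Sym2 V) :=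
    Finset.prod_pos fun e _ => Real.rpow_pos_of_pos (hx e) _
  have h2 : 0 < ∏ v ∈ Finset.univ.erase v₀, vwt G x v ^ (-(avwt G a v + 1) / 2) :=
    Finset.prod_pos fun v _ => Real.rpow_pos_of_pos (hvp v) _
  have h3 := Real.rpow_pos_of_pos (hvp v₀) (-avwt G a v₀ / 2)
  have h4 := Real.sqrt_pos.mpr ht
  unfold Phi
  rw [Real.log_mul (by positivity) h4.ne', Real.log_mul (by positivity) h2.ne',
    Real.log_mul h1.ne' h3.ne',
    Real.log_prod (fun e _ => (Real.rpow_pos_of_pos (hx e) _).ne'),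
    Real.log_prod (fun v _ => (Real.rpow_pos_of_pos (hvp v) _).ne'),
    Real.log_sqrt ht.le, Real.log_rpow (hvp v₀),
    Finset.sum_congr rfl (fun e _ => Real.log_rpow (hx e) _),
    Finset.sum_congr rfl (fun v (_ : v ∈ Finset.univ.erase v₀) => Real.log_rpow (hvp v) _)]
  ring

lemma Xi_pos (φ : Sym2 V → ℝ) (γ : ℝ) {x : G.edgeSet → ℝ} (hx : ∀ e, 0 < x e) :
    ∀ e, 0 < Xi G φ γ x e := fun e => mul_pos (Real.exp_pos _) (hx e)

lemma vwt_Xi_eq (φ : Sym2 V → ℝ) (γ : ℝ) (x : G.edgeSet → ℝ) {v : V}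
    (hφ : ∀ e : G.edgeSet, v ∈ (e : Sym2 V) → φ (e : Sym2 V) = 0) :
    vwt G (Xi G φ γ x) v = vwt G x v := by
  unfold vwt Xi
  refine Finset.sum_congr rfl fun e _ => ?_
  split
  · next h => rw [hφ e h]; simp
  · rfl

lemma vwt_Xi_exp (φ : Sym2 V → ℝ) (γ : ℝ) (x : G.edgeSet → ℝ) {v : V}
    (hφ : ∀ e : G.edgeSet, v ∈ (e : Sym2 V) → φ (e : Sym2 V) = 1) :
    vwt G (Xi G φ γ x) v = Real.exp γ * vwt G x v := by
  unfold vwt Xi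
  rw [Finset.mul_sum]
  refine Finset.sum_congr rfl fun e _ => ?_
  split
  · next h => rw [hφ e h, mul_one]
  · simp

lemma sum_a_log_Xi (a φ : Sym2 V → ℝ) (γ : ℝ) {x : G.edgeSet → ℝ} (hx : ∀ e, 0 < x e) :
    ∑ e : G.edgeSet, a (e : Sym2 V) * Real.log (Xi G φ γ x e)
      = γ * (∑ e : G.edgeSet, φ (e : Sym2 V) * a (e : Sym2 V))
        + ∑ e : G.edgeSet, a (e : Sym2 V) * Real.log (x e) := by
  rw [Finset.mul_sum, ← Finset.sum_add_distrib]
  refine Finset.sum_congr rfl fun e _ => ?_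
  unfold Xi
  rw [Real.log_mul (Real.exp_pos _).ne' (hx e).ne', Real.log_exp]
  ring

lemma key_log_eq (a φ : Sym2 V → ℝ) (v₀ v₁ : V) (γ : ℝ) {x : G.edgeSet → ℝ}
    (hx : ∀ e, 0 < x e) (hv01 : v₀ ≠ v₁)
    (hφ0 : ∀ e : G.edgeSet, v₀ ∈ (e : Sym2 V) → φ (e : Sym2 V) = 0)
    (hφ1 : ∀ e : G.edgeSet, v₁ ∈ (e : Sym2 V) → φ (e : Sym2 V) = 1)
    (hedge : ∀ v : V, ∃ e : G.edgeSet, v ∈ (e : Sym2 V))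
    (hT : ∃ T, IsSpanningTree G T) :
    (1 / 2) * (Real.log (Phi G a v₀ x) + Real.log (Phi G a v₁ x)
      - Real.log (Phi G a v₀ (Xi G φ γ x)) - Real.log (Phi G a v₁ (Xi G φ γ x)))
      = fgamma G a φ v₀ v₁ γ x := by
  have hx' : ∀ e, 0 < Xi G φ γ x e := Xi_pos G φ γ hx
  have hvp : ∀ v, 0 < vwt G x v := fun v => vwt_pos G hx (hedge v)
  have hvp' : ∀ v, 0 < vwt G (Xi G φ γ x) v := fun v => vwt_pos G hx' (hedge v)
  have ht : 0 < treeSum G x := treeSum_pos G hx hT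
  have ht' : 0 < treeSum G (Xi G φ γ x) := treeSum_pos G hx' hT
  -- index set manipulations
  set S : Finset V := Finset.univ \ {v₀, v₁} with hS
  have h0S : v₀ ∉ S := by simp [hS]
  have h1S : v₁ ∉ S := by simp [hS]
  have hins0 : Finset.univ.erase v₀ = insert v₁ S := by
    ext v
    simp only [Finset.mem_erase, Finset.mem_univ, and_true, Finset.mem_insert, hS,
      Finset.mem_sdiff, Finset.mem_singleton, Finset.mem_insert, true_and]
    constructor
    · intro h
      by_cases h1 : v = v₁
      · exact Or.inl h1
      · exact Or.inr (by tauto)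
    · rintro (rfl | h)
      · exact Ne.symm hv01
      · tauto
  have hins1 : Finset.univ.erase v₁ = insert v₀ S := by
    ext v
    simp only [Finset.mem_erase, Finset.mem_univ, and_true, Finset.mem_insert, hS,
      Finset.mem_sdiff, Finset.mem_singleton, Finset.mem_insert, true_and]
    constructor
    · intro h
      by_cases h1 : v = v₀
      · exact Or.inl h1
      · exact Or.inr (by tauto)
    · rintro (rfl | h)
      · exact hv01
      · tauto
  rw [log_Phi_expand G a v₀ hx hvp ht, log_Phi_expand G a v₁ hx hvp ht,
    log_Phi_expand G a v₀ hx' hvp' ht', log_Phi_expand G a v₁ hx' hvp' ht',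
    hins0, hins1, Finset.sum_insert h1S, Finset.sum_insert h0S,
    Finset.sum_insert h1S, Finset.sum_insert h0S,
    sum_a_log_Xi G a φ γ hx,
    vwt_Xi_eq G φ γ x hφ0, vwt_Xi_exp G φ γ x hφ1,
    Real.log_mul (Real.exp_pos _).ne' (hvp v₁).ne', Real.log_exp]
  unfold fgamma
  rw [Finset.sum_congr rfl (fun v (hv : v ∈ Finset.univ \ {v₀, v₁}) =>
      (by rw [Real.log_div (hvp' v).ne' (hvp v).ne'] :
        (avwt G a v + 1) / 2 * Real.log (vwt G (Xi G φ γ x) v / vwt G x v)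
          = (avwt G a v + 1) / 2 * (Real.log (vwt G (Xi G φ γ x) v) - Real.log (vwt G x v)))),
    Real.log_div ht'.ne' ht.ne', ← hS]
  have expand : ∀ y : G.edgeSet → ℝ,
      ∑ v ∈ S, -(avwt G a v + 1) / 2 * Real.log (vwt G y v)
        = -∑ v ∈ S, (avwt G a v + 1) / 2 * Real.log (vwt G y v) := by
    intro y
    rw [← Finset.sum_neg_distrib]
    exact Finset.sum_congr rfl fun v _ => by ring
  rw [expand, expand]
  have expand2 : ∑ v ∈ S, (avwt G a v + 1) / 2
        * (Real.log (vwt G (Xi G φ γ x) v) - Real.log (vwt G x v))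
      = (∑ v ∈ S, (avwt G a v + 1) / 2 * Real.log (vwt G (Xi G φ γ x) v))
        - ∑ v ∈ S, (avwt G a v + 1) / 2 * Real.log (vwt G x v) := by
    rw [← Finset.sum_sub_distrib]
    exact Finset.sum_congr rfl fun v _ => by ring
  rw [expand2]
  ring

def XiME (φ : Sym2 V → ℝ) (γ : ℝ) : (G.edgeSet → ℝ) ≃ᵐ (G.edgeSet → ℝ) where
  toFun := Xi G φ γ
  invFun := Xi G φ (-γ)
  left_inv x := by rw [Xi_Xi, neg_add_cancel, Xi_zero]
  right_inv x := by rw [Xi_Xi, add_neg_cancel, Xi_zero]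
  measurable_toFun := measurable_Xi G φ γ
  measurable_invFun := measurable_Xi G φ (-γ)

lemma interpDens_ne_top (a : Sym2 V → ℝ) (v₀ v₁ : V) (e₀ : G.edgeSet)
    (hz0 : z G a v₀ e₀ ≠ 0) (hz1 : z G a v₁ e₀ ≠ 0) (x : G.edgeSet → ℝ) :
    interpDens G a v₀ v₁ e₀ x ≠ ⊤ := by
  unfold interpDens
  refine (ENNReal.rpow_lt_top_of_nonneg (by norm_num) ?_).ne
  exact (ENNReal.mul_lt_top (ENNReal.div_lt_top ENNReal.ofReal_ne_top hz0)
    (ENNReal.div_lt_top ENNReal.ofReal_ne_top hz1)).ne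

lemma interpDens_eq_ofReal (a : Sym2 V → ℝ) (v₀ v₁ : V) (e₀ : G.edgeSet)
    (hz0 : z G a v₀ e₀ ≠ 0) (hz0t : z G a v₀ e₀ ≠ ⊤)
    (hz1 : z G a v₁ e₀ ≠ 0) (hz1t : z G a v₁ e₀ ≠ ⊤)
    {x : G.edgeSet → ℝ} (h0 : 0 < Phi G a v₀ x) (h1 : 0 < Phi G a v₁ x) :
    interpDens G a v₀ v₁ e₀ x = ENNReal.ofReal
      ((Phi G a v₀ x / (z G a v₀ e₀).toReal
        * (Phi G a v₁ x / (z G a v₁ e₀).toReal)) ^ (1 / 2 : ℝ)) := by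
  have hz0r : 0 < (z G a v₀ e₀).toReal := ENNReal.toReal_pos hz0 hz0t
  have hz1r : 0 < (z G a v₁ e₀).toReal := ENNReal.toReal_pos hz1 hz1t
  unfold interpDens
  rw [show z G a v₀ e₀ = ENNReal.ofReal (z G a v₀ e₀).toReal from
      (ENNReal.ofReal_toReal hz0t).symm,
    show z G a v₁ e₀ = ENNReal.ofReal (z G a v₁ e₀).toReal from
      (ENNReal.ofReal_toReal hz1t).symm,
    ← ENNReal.ofReal_div_of_pos hz0r, ← ENNReal.ofReal_div_of_pos hz1r,
    ← ENNReal.ofReal_mul (by positivity),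
    ENNReal.ofReal_rpow_of_pos (by positivity),
    ENNReal.toReal_ofReal hz0r.le, ENNReal.toReal_ofReal hz1r.le]

lemma log_interpDens_ratio (a : Sym2 V → ℝ) (v₀ v₁ : V) (e₀ : G.edgeSet)
    (hz0 : z G a v₀ e₀ ≠ 0) (hz0t : z G a v₀ e₀ ≠ ⊤)
    (hz1 : z G a v₁ e₀ ≠ 0) (hz1t : z G a v₁ e₀ ≠ ⊤)
    {x y : G.edgeSet → ℝ}
    (hx0 : 0 < Phi G a v₀ x) (hx1 : 0 < Phi G a v₁ x)
    (hy0 : 0 < Phi G a v₀ y) (hy1 : 0 < Phi G a v₁ y) :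
    Real.log ((interpDens G a v₀ v₁ e₀ x / interpDens G a v₀ v₁ e₀ y).toReal)
      = (1 / 2) * (Real.log (Phi G a v₀ x) + Real.log (Phi G a v₁ x)
        - Real.log (Phi G a v₀ y) - Real.log (Phi G a v₁ y)) := by
  have hz0r : 0 < (z G a v₀ e₀).toReal := ENNReal.toReal_pos hz0 hz0t
  have hz1r : 0 < (z G a v₁ e₀).toReal := ENNReal.toReal_pos hz1 hz1t
  rw [interpDens_eq_ofReal G a v₀ v₁ e₀ hz0 hz0t hz1 hz1t hx0 hx1,
    interpDens_eq_ofReal G a v₀ v₁ e₀ hz0 hz0t hz1 hz1t hy0 hy1,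
    ENNReal.toReal_div, ENNReal.toReal_ofReal (by positivity),
    ENNReal.toReal_ofReal (by positivity),
    Real.log_div (by positivity) (by positivity),
    Real.log_rpow (by positivity), Real.log_rpow (by positivity),
    Real.log_mul (by positivity) (by positivity),
    Real.log_mul (by positivity) (by positivity),
    Real.log_div hx0.ne' hz0r.ne', Real.log_div hx1.ne' hz1r.ne',
    Real.log_div hy0.ne' hz0r.ne', Real.log_div hy1.ne' hz1r.ne']
  ring

lemma log_ratio_bound {A B c : ℝ} (hA : 0 < A) (hL : Real.exp (-c) * A ≤ B)
    (hU : B ≤ Real.exp c * A) : |Real.log (B / A)| ≤ c := by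
  have hB : 0 < B := lt_of_lt_of_le (by positivity) hL
  rw [abs_le]
  constructor
  · have h : Real.exp (-c) ≤ B / A := (le_div_iff₀ hA).mpr (by linarith)
    calc -c = Real.log (Real.exp (-c)) := (Real.log_exp _).symm
      _ ≤ Real.log (B / A) := Real.log_le_log (Real.exp_pos _) h
  · have h : B / A ≤ Real.exp c := (div_le_iff₀ hA).mpr (by linarith)
    calc Real.log (B / A) ≤ Real.log (Real.exp c) := Real.log_le_log (by positivity) h
      _ = c := Real.log_exp _

lemma vwt_Xi_bounds (φ : Sym2 V → ℝ) (γ : ℝ) {x : G.edgeSet → ℝ} (hx : ∀ e, 0 < x e)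
    (hφ : ∀ e : G.edgeSet, φ (e : Sym2 V) ∈ Set.Icc (0:ℝ) 1) (v : V) :
    Real.exp (-|γ|) * vwt G x v ≤ vwt G (Xi G φ γ x) v ∧
      vwt G (Xi G φ γ x) v ≤ Real.exp |γ| * vwt G x v := by
  have hb : ∀ e : G.edgeSet, -|γ| ≤ γ * φ (e : Sym2 V) ∧ γ * φ (e : Sym2 V) ≤ |γ| := by
    intro e
    have hφe := hφ e
    have h2 : |φ (e : Sym2 V)| ≤ 1 := abs_le.mpr ⟨by linarith [hφe.1], hφe.2⟩
    refine abs_le.mp ?_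
    calc |γ * φ (e : Sym2 V)| = |γ| * |φ (e : Sym2 V)| := abs_mul _ _
      _ ≤ |γ| * 1 := mul_le_mul_of_nonneg_left h2 (abs_nonneg γ)
      _ = |γ| := mul_one _
  constructor
  · unfold vwt Xi
    rw [Finset.mul_sum]
    refine Finset.sum_le_sum fun e _ => ?_
    split
    · exact mul_le_mul_of_nonneg_right (Real.exp_le_exp.mpr (hb e).1) (hx e).le
    · simp
  · unfold vwt Xi
    rw [Finset.mul_sum]
    refine Finset.sum_le_sum fun e _ => ?_
    split
    · exact mul_le_mul_of_nonneg_right (Real.exp_le_exp.mpr (hb e).2) (hx e).le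
    · simp

lemma treeSum_Xi_bounds (φ : Sym2 V → ℝ) (γ : ℝ) {x : G.edgeSet → ℝ} (hx : ∀ e, 0 < x e)
    (hφ : ∀ e : G.edgeSet, φ (e : Sym2 V) ∈ Set.Icc (0:ℝ) 1) :
    Real.exp (-(|γ| * Fintype.card G.edgeSet)) * treeSum G x ≤ treeSum G (Xi G φ γ x) ∧
      treeSum G (Xi G φ γ x) ≤ Real.exp (|γ| * Fintype.card G.edgeSet) * treeSum G x := by
  set m : ℝ := (Fintype.card G.edgeSet : ℝ) with hm
  have key : ∀ T : Finset G.edgeSet, -(|γ| * m) ≤ ∑ e ∈ T, γ * φ (e : Sym2 V) ∧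
      (∑ e ∈ T, γ * φ (e : Sym2 V)) ≤ |γ| * m := by
    intro T
    have h1 : |∑ e ∈ T, γ * φ (e : Sym2 V)| ≤ |γ| * m := by
      calc |∑ e ∈ T, γ * φ (e : Sym2 V)| ≤ ∑ e ∈ T, |γ * φ (e : Sym2 V)| :=
          Finset.abs_sum_le_sum_abs _ _
        _ ≤ ∑ _e ∈ T, |γ| := by
          refine Finset.sum_le_sum fun e _ => ?_
          have hφe := hφ e
          have h2 : |φ (e : Sym2 V)| ≤ 1 := abs_le.mpr ⟨by linarith [hφe.1], hφe.2⟩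
          calc |γ * φ (e : Sym2 V)| = |γ| * |φ (e : Sym2 V)| := abs_mul _ _
            _ ≤ |γ| * 1 := mul_le_mul_of_nonneg_left h2 (abs_nonneg γ)
            _ = |γ| := mul_one _
        _ = T.card * |γ| := by rw [Finset.sum_const, nsmul_eq_mul]
        _ ≤ m * |γ| := by
          have hc : (T.card : ℝ) ≤ m := by
            rw [hm]
            exact_mod_cast Finset.card_le_univ T
          exact mul_le_mul_of_nonneg_right hc (abs_nonneg γ)
        _ = |γ| * m := mul_comm _ _
    exact abs_le.mp h1
  have hprod : ∀ T : Finset G.edgeSet, ∏ e ∈ T, Xi G φ γ x e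
      = Real.exp (∑ e ∈ T, γ * φ (e : Sym2 V)) * ∏ e ∈ T, x e := by
    intro T
    unfold Xi
    rw [Finset.prod_mul_distrib, Real.exp_sum]
  constructor
  · unfold treeSum
    rw [Finset.mul_sum]
    refine Finset.sum_le_sum fun T _ => ?_
    split
    · rw [hprod T]
      exact mul_le_mul_of_nonneg_right (Real.exp_le_exp.mpr (key T).1)
        (Finset.prod_pos fun e _ => hx e).le
    · simp
  · unfold treeSum
    rw [Finset.mul_sum]
    refine Finset.sum_le_sum fun T _ => ?_
    split
    · rw [hprod T]
      exact mul_le_mul_of_nonneg_right (Real.exp_le_exp.mpr (key T).2)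
        (Finset.prod_pos fun e _ => hx e).le
    · simp

lemma abs_fgamma_le (a φ : Sym2 V → ℝ) (v₀ v₁ : V) (γ : ℝ)
    (hφ : ∀ e : G.edgeSet, φ (e : Sym2 V) ∈ Set.Icc (0:ℝ) 1)
    (hedge : ∀ v : V, ∃ e : G.edgeSet, v ∈ (e : Sym2 V))
    (hT : ∃ T, IsSpanningTree G T)
    {x : G.edgeSet → ℝ} (hx : ∀ e, 0 < x e) :
    |fgamma G a φ v₀ v₁ γ x| ≤
      |γ * (avwt G a v₁ / 2 + 1 / 4)| + |γ * ∑ e : G.edgeSet, φ (e : Sym2 V) * a (e : Sym2 V)|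
        + (∑ v ∈ Finset.univ \ {v₀, v₁}, |(avwt G a v + 1) / 2| * |γ|)
        + (1 / 2) * (|γ| * Fintype.card G.edgeSet) := by
  unfold fgamma
  have hvb : ∀ v, |Real.log (vwt G (Xi G φ γ x) v / vwt G x v)| ≤ |γ| := fun v =>
    log_ratio_bound (vwt_pos G hx (hedge v)) (vwt_Xi_bounds G φ γ hx hφ v).1
      (vwt_Xi_bounds G φ γ hx hφ v).2
  have htb : |Real.log (treeSum G (Xi G φ γ x) / treeSum G x)|
      ≤ |γ| * Fintype.card G.edgeSet :=
    log_ratio_bound (treeSum_pos G hx hT) (treeSum_Xi_bounds G φ γ hx hφ).1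
      (treeSum_Xi_bounds G φ γ hx hφ).2
  have hsum : |∑ v ∈ Finset.univ \ {v₀, v₁},
      (avwt G a v + 1) / 2 * Real.log (vwt G (Xi G φ γ x) v / vwt G x v)|
      ≤ ∑ v ∈ Finset.univ \ {v₀, v₁}, |(avwt G a v + 1) / 2| * |γ| := by
    calc _ ≤ ∑ v ∈ Finset.univ \ {v₀, v₁},
        |(avwt G a v + 1) / 2 * Real.log (vwt G (Xi G φ γ x) v / vwt G x v)| :=
        Finset.abs_sum_le_sum_abs _ _
      _ ≤ _ := by
        refine Finset.sum_le_sum fun v _ => ?_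
        rw [abs_mul]
        exact mul_le_mul_of_nonneg_left (hvb v) (abs_nonneg _)
  have h4 : |1 / 2 * Real.log (treeSum G (Xi G φ γ x) / treeSum G x)|
      ≤ 1 / 2 * (|γ| * Fintype.card G.edgeSet) := by
    rw [abs_mul]
    rw [show |(1:ℝ)/2| = 1/2 by norm_num]
    linarith [htb]
  calc |γ * (avwt G a v₁ / 2 + 1 / 4) - γ * ∑ e : G.edgeSet, φ (e : Sym2 V) * a (e : Sym2 V)
      + (∑ v ∈ Finset.univ \ {v₀, v₁},
        (avwt G a v + 1) / 2 * Real.log (vwt G (Xi G φ γ x) v / vwt G x v))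
      - 1 / 2 * Real.log (treeSum G (Xi G φ γ x) / treeSum G x)|
      ≤ |γ * (avwt G a v₁ / 2 + 1 / 4) - γ * ∑ e : G.edgeSet, φ (e : Sym2 V) * a (e : Sym2 V)
        + (∑ v ∈ Finset.univ \ {v₀, v₁},
          (avwt G a v + 1) / 2 * Real.log (vwt G (Xi G φ γ x) v / vwt G x v))|
        + |1 / 2 * Real.log (treeSum G (Xi G φ γ x) / treeSum G x)| := abs_sub _ _
    _ ≤ |γ * (avwt G a v₁ / 2 + 1 / 4) - γ * ∑ e : G.edgeSet, φ (e : Sym2 V) * a (e : Sym2 V)|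
        + |∑ v ∈ Finset.univ \ {v₀, v₁},
          (avwt G a v + 1) / 2 * Real.log (vwt G (Xi G φ γ x) v / vwt G x v)|
        + |1 / 2 * Real.log (treeSum G (Xi G φ γ x) / treeSum G x)| := by
        linarith [abs_add_le (γ * (avwt G a v₁ / 2 + 1 / 4)
          - γ * ∑ e : G.edgeSet, φ (e : Sym2 V) * a (e : Sym2 V))
          (∑ v ∈ Finset.univ \ {v₀, v₁},
            (avwt G a v + 1) / 2 * Real.log (vwt G (Xi G φ γ x) v / vwt G x v))]
    _ ≤ _ := by
        have habs : |γ * (avwt G a v₁ / 2 + 1 / 4)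
            - γ * ∑ e : G.edgeSet, φ (e : Sym2 V) * a (e : Sym2 V)|
            ≤ |γ * (avwt G a v₁ / 2 + 1 / 4)|
              + |γ * ∑ e : G.edgeSet, φ (e : Sym2 V) * a (e : Sym2 V)| := abs_sub _ _
        linarith [hsum, h4]

end
end ERRWGraph
open ERRWGraph in
/-- Lemma 5.6: under Assumption 2.3, the relative entropy of `Π^{γφ}` with respect to
`ℙ_{v₀,v₁,e₀}` is nonnegative and finite; equivalently `0 ≤ ∫ f_γ dℙ_{v₀,v₁,e₀} < ∞`. -/
theorem entropy_nonneg_finite {V : Type*} [Fintype V] [DecidableEq V]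
    (G : SimpleGraph V) [Fintype G.edgeSet] (hG : G.Connected)
    (a φ : Sym2 V → ℝ) (ha : ∀ e ∈ G.edgeSet, 0 < a e)
    (v₀ v₁ : V) (e₀ : G.edgeSet)
    (hass : Assumption23 G a φ v₀ v₁ e₀)
    (hz0 : z G a v₀ e₀ ≠ ⊤) (hz1 : z G a v₁ e₀ ≠ ⊤) (γ : ℝ) :
    Integrable (logRN (PiGamma G a φ v₀ v₁ e₀ γ) (Pm G a v₀ v₁ e₀))
      (PiGamma G a φ v₀ v₁ e₀ γ) ∧
    0 ≤ ∫ x, logRN (PiGamma G a φ v₀ v₁ e₀ γ) (Pm G a v₀ v₁ e₀) x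
        ∂PiGamma G a φ v₀ v₁ e₀ γ ∧
    Integrable (fgamma G a φ v₀ v₁ γ) (Pm G a v₀ v₁ e₀) ∧
    (∫ x, logRN (PiGamma G a φ v₀ v₁ e₀ γ) (Pm G a v₀ v₁ e₀) x
        ∂PiGamma G a φ v₀ v₁ e₀ γ) =
      ∫ x, fgamma G a φ v₀ v₁ γ x ∂Pm G a v₀ v₁ e₀ := by
  obtain ⟨hv01, hnadj, hv0e0, _hauto, hφIcc, hφ0, hφ1⟩ := hass
  have hφe₀ : φ (e₀ : Sym2 V) = 0 := hφ0 e₀ hv0e0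
  have hgmeas : Measurable (interpDens G a v₀ v₁ e₀) := measurable_interpDens G a v₀ v₁ e₀
  by_cases hdeg : Zc G a v₀ v₁ e₀ = 0 ∨ Zc G a v₀ v₁ e₀ = ⊤
  · have hPm : Pm G a v₀ v₁ e₀ = 0 := by
      unfold Pm
      rcases hdeg with h | h
      · have h0 : interpDens G a v₀ v₁ e₀ =ᵐ[rho G e₀] 0 :=
          (lintegral_eq_zero_iff hgmeas).mp h
        rw [withDensity_congr_ae h0, withDensity_zero, smul_zero]
      · rw [h, ENNReal.inv_top, zero_smul]
    have hPi : PiGamma G a φ v₀ v₁ e₀ γ = 0 := by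
      unfold PiGamma; rw [hPm, Measure.map_zero]
    refine ⟨?_, ?_, ?_, ?_⟩ <;>
      simp [hPi, hPm, integrable_zero_measure, integral_zero_measure]
  · push_neg at hdeg
    obtain ⟨hZ0, hZT⟩ := hdeg
    have hz0n : z G a v₀ e₀ ≠ 0 := by
      intro h
      apply hZ0
      have h0 : (fun x => ENNReal.ofReal (Phi G a v₀ x)) =ᵐ[rho G e₀] 0 :=
        (lintegral_eq_zero_iff (ENNReal.measurable_ofReal.comp (measurable_Phi G a v₀))).mp h
      have h1 : interpDens G a v₀ v₁ e₀ =ᵐ[rho G e₀] 0 := h0.mono fun x hx => by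
        have hx' : ENNReal.ofReal (Phi G a v₀ x) = 0 := hx
        show interpDens G a v₀ v₁ e₀ x = 0
        unfold interpDens
        rw [hx', ENNReal.zero_div, zero_mul, ENNReal.zero_rpow_of_pos (by norm_num)]
      show (∫⁻ x, interpDens G a v₀ v₁ e₀ x ∂rho G e₀) = 0
      rw [lintegral_congr_ae h1]; simp
    have hz1n : z G a v₁ e₀ ≠ 0 := by
      intro h
      apply hZ0
      have h0 : (fun x => ENNReal.ofReal (Phi G a v₁ x)) =ᵐ[rho G e₀] 0 :=
        (lintegral_eq_zero_iff (ENNReal.measurable_ofReal.comp (measurable_Phi G a v₁))).mp h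
      have h1 : interpDens G a v₀ v₁ e₀ =ᵐ[rho G e₀] 0 := h0.mono fun x hx => by
        have hx' : ENNReal.ofReal (Phi G a v₁ x) = 0 := hx
        show interpDens G a v₀ v₁ e₀ x = 0
        unfold interpDens
        rw [hx', ENNReal.zero_div, mul_zero, ENNReal.zero_rpow_of_pos (by norm_num)]
      show (∫⁻ x, interpDens G a v₀ v₁ e₀ x ∂rho G e₀) = 0
      rw [lintegral_congr_ae h1]; simp
    have hTspan := exists_spanning_of_z_ne G a v₀ e₀ hz0n
    have hedge : ∀ v : V, ∃ e : G.edgeSet, v ∈ (e : Sym2 V) := exists_mem_edge G hG e₀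
    have hρae : ∀ᵐ x ∂rho G e₀, ∀ e, 0 < x e := rho_ae_pos G e₀
    have hgfin := interpDens_ne_top G a v₀ v₁ e₀ hz0n hz1n
    have hPhipos : ∀ (v : V) (x : G.edgeSet → ℝ), (∀ e, 0 < x e) → 0 < Phi G a v x :=
      fun v x hx => Phi_pos G a v hx (fun w => vwt_pos G hx (hedge w)) hTspan
    have hz0r : 0 < (z G a v₀ e₀).toReal := ENNReal.toReal_pos hz0n hz0
    have hz1r : 0 < (z G a v₁ e₀).toReal := ENNReal.toReal_pos hz1n hz1
    have hgne : ∀ (x : G.edgeSet → ℝ), (∀ e, 0 < x e) → interpDens G a v₀ v₁ e₀ x ≠ 0 := by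
      intro x hx
      rw [interpDens_eq_ofReal G a v₀ v₁ e₀ hz0n hz0 hz1n hz1 (hPhipos v₀ x hx)
        (hPhipos v₁ x hx)]
      have h0 := hPhipos v₀ x hx
      have h1 := hPhipos v₁ x hx
      exact (ENNReal.ofReal_pos.mpr (by positivity)).ne'
    have hXi : Measurable (Xi G φ γ) := measurable_Xi G φ γ
    have hXiae : AEMeasurable (Xi G φ γ) (Pm G a v₀ v₁ e₀) := (measurable_Xi G φ γ).aemeasurable
    set D : (G.edgeSet → ℝ) → ℝ≥0∞ :=
      fun x => interpDens G a v₀ v₁ e₀ (Xi G φ (-γ) x) / interpDens G a v₀ v₁ e₀ x with hD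
    have hDmeas : Measurable D := (hgmeas.comp (measurable_Xi G φ (-γ))).div hgmeas
    haveI hPprob : IsProbabilityMeasure (Pm G a v₀ v₁ e₀) := by
      constructor
      show ((Zc G a v₀ v₁ e₀)⁻¹ •
        (rho G e₀).withDensity (interpDens G a v₀ v₁ e₀)) Set.univ = 1
      rw [Measure.smul_apply, withDensity_apply _ MeasurableSet.univ, Measure.restrict_univ,
        smul_eq_mul]
      exact ENNReal.inv_mul_cancel hZ0 hZT
    have hmapXi : Measure.map (Xi G φ γ) (rho G e₀) = rho G e₀ := map_Xi_rho G φ γ e₀ hφe₀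
    have hmapwd : Measure.map (Xi G φ γ) ((rho G e₀).withDensity (interpDens G a v₀ v₁ e₀))
        = (rho G e₀).withDensity (fun y => interpDens G a v₀ v₁ e₀ (Xi G φ (-γ) y)) := by
      have h := map_withDensity_equiv (XiME G φ γ) (rho G e₀) hgmeas
      have hco : ⇑(XiME G φ γ) = Xi G φ γ := rfl
      have hcs : ⇑(XiME G φ γ).symm = Xi G φ (-γ) := rfl
      rw [hco, hcs] at h
      rw [h, hmapXi]
    have hQ : PiGamma G a φ v₀ v₁ e₀ γ = (Pm G a v₀ v₁ e₀).withDensity D := by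
      unfold PiGamma Pm
      rw [Measure.map_smul, withDensity_smul_measure, hmapwd,
        ← withDensity_mul _ hgmeas hDmeas]
      congr 1
      refine withDensity_congr_ae (hρae.mono fun x hx => ?_)
      have h := ENNReal.mul_div_cancel (a := interpDens G a v₀ v₁ e₀ x)
        (b := interpDens G a v₀ v₁ e₀ (Xi G φ (-γ) x)) (hgne x hx) (hgfin x)
      simpa [hD, Pi.mul_apply] using h.symm
    haveI hQprob : IsProbabilityMeasure (PiGamma G a φ v₀ v₁ e₀ γ) := by
      unfold PiGamma; exact Measure.isProbabilityMeasure_map hXi.aemeasurable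
    have hQP : PiGamma G a φ v₀ v₁ e₀ γ ≪ Pm G a v₀ v₁ e₀ := by
      rw [hQ]; exact withDensity_absolutelyContinuous _ _
    have hPρ : Pm G a v₀ v₁ e₀ ≪ rho G e₀ := by
      unfold Pm
      exact Measure.AbsolutelyContinuous.trans Measure.smul_absolutelyContinuous
        (withDensity_absolutelyContinuous _ _)
    have hPae : ∀ᵐ x ∂Pm G a v₀ v₁ e₀, ∀ e, 0 < x e := hρae.filter_mono hPρ.ae_le
    have hrn : (PiGamma G a φ v₀ v₁ e₀ γ).rnDeriv (Pm G a v₀ v₁ e₀) =ᵐ[Pm G a v₀ v₁ e₀] D := by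
      rw [hQ]; exact Measure.rnDeriv_withDensity _ hDmeas
    have hlogRNmeas : Measurable (logRN (PiGamma G a φ v₀ v₁ e₀ γ) (Pm G a v₀ v₁ e₀)) := by
      unfold logRN
      exact (Measure.measurable_rnDeriv _ _).ennreal_toReal.log
    have h1 : ∀ᵐ y ∂PiGamma G a φ v₀ v₁ e₀ γ,
        logRN (PiGamma G a φ v₀ v₁ e₀ γ) (Pm G a v₀ v₁ e₀) y = Real.log ((D y).toReal) :=
      (hrn.mono fun y hy => by unfold logRN; rw [hy]).filter_mono hQP.ae_le
    have hsetmeas : MeasurableSet {y | logRN (PiGamma G a φ v₀ v₁ e₀ γ) (Pm G a v₀ v₁ e₀) y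
        = Real.log ((D y).toReal)} :=
      measurableSet_eq_fun hlogRNmeas (hDmeas.ennreal_toReal.log)
    have h2 : ∀ᵐ x ∂Pm G a v₀ v₁ e₀,
        logRN (PiGamma G a φ v₀ v₁ e₀ γ) (Pm G a v₀ v₁ e₀) (Xi G φ γ x)
          = Real.log ((D (Xi G φ γ x)).toReal) := by
      have h1' : ∀ᵐ y ∂Measure.map (Xi G φ γ) (Pm G a v₀ v₁ e₀),
          logRN (PiGamma G a φ v₀ v₁ e₀ γ) (Pm G a v₀ v₁ e₀) y = Real.log ((D y).toReal) := h1
      exact (ae_map_iff hXiae hsetmeas).mp h1'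
    have hkey : ∀ x : G.edgeSet → ℝ, (∀ e, 0 < x e) →
        Real.log ((D (Xi G φ γ x)).toReal) = fgamma G a φ v₀ v₁ γ x := by
      intro x hx
      have hXX : Xi G φ (-γ) (Xi G φ γ x) = x := by rw [Xi_Xi, neg_add_cancel, Xi_zero]
      have hx' : ∀ e, 0 < Xi G φ γ x e := Xi_pos G φ γ hx
      have hDeq : D (Xi G φ γ x) = interpDens G a v₀ v₁ e₀ x
          / interpDens G a v₀ v₁ e₀ (Xi G φ γ x) := by
        show interpDens G a v₀ v₁ e₀ (Xi G φ (-γ) (Xi G φ γ x))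
          / interpDens G a v₀ v₁ e₀ (Xi G φ γ x) = _
        rw [hXX]
      rw [hDeq, log_interpDens_ratio G a v₀ v₁ e₀ hz0n hz0 hz1n hz1 (hPhipos v₀ x hx)
        (hPhipos v₁ x hx) (hPhipos v₀ _ hx') (hPhipos v₁ _ hx'),
        key_log_eq G a φ v₀ v₁ γ hx hv01 hφ0 hφ1 hedge hTspan]
    have h3 : (fun x => logRN (PiGamma G a φ v₀ v₁ e₀ γ) (Pm G a v₀ v₁ e₀) (Xi G φ γ x))
        =ᵐ[Pm G a v₀ v₁ e₀] fgamma G a φ v₀ v₁ γ :=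
      h2.mp (hPae.mono fun x hx h => h.trans (hkey x hx))
    have hint_f : Integrable (fgamma G a φ v₀ v₁ γ) (Pm G a v₀ v₁ e₀) := by
      refine Integrable.mono' (integrable_const
          (|γ * (avwt G a v₁ / 2 + 1 / 4)|
            + |γ * ∑ e : G.edgeSet, φ (e : Sym2 V) * a (e : Sym2 V)|
            + (∑ v ∈ Finset.univ \ {v₀, v₁}, |(avwt G a v + 1) / 2| * |γ|)
            + (1 / 2) * (|γ| * Fintype.card G.edgeSet)))
        (measurable_fgamma G a φ v₀ v₁ γ).aestronglyMeasurable (hPae.mono fun x hx => ?_)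
      rw [Real.norm_eq_abs]
      exact abs_fgamma_le G a φ v₀ v₁ γ hφIcc hedge hTspan hx
    have hint_log : Integrable (logRN (PiGamma G a φ v₀ v₁ e₀ γ) (Pm G a v₀ v₁ e₀))
        (PiGamma G a φ v₀ v₁ e₀ γ) := by
      show Integrable _ (Measure.map (Xi G φ γ) (Pm G a v₀ v₁ e₀))
      rw [integrable_map_measure hlogRNmeas.aestronglyMeasurable hXiae]
      exact hint_f.congr h3.symm
    have heq : ∫ y, logRN (PiGamma G a φ v₀ v₁ e₀ γ) (Pm G a v₀ v₁ e₀) y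
        ∂PiGamma G a φ v₀ v₁ e₀ γ = ∫ x, fgamma G a φ v₀ v₁ γ x ∂Pm G a v₀ v₁ e₀ := by
      have heq2 : ∫ y, logRN (PiGamma G a φ v₀ v₁ e₀ γ) (Pm G a v₀ v₁ e₀) y
          ∂Measure.map (Xi G φ γ) (Pm G a v₀ v₁ e₀)
          = ∫ x, logRN (PiGamma G a φ v₀ v₁ e₀ γ) (Pm G a v₀ v₁ e₀) (Xi G φ γ x)
            ∂Pm G a v₀ v₁ e₀ :=
        integral_map hXiae hlogRNmeas.aestronglyMeasurable
      exact heq2.trans (integral_congr_ae h3)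
    -- nonnegativity
    have hDfin : ∀ᵐ x ∂Pm G a v₀ v₁ e₀, D x < ⊤ :=
      hPae.mono fun x hx => ENNReal.div_lt_top (hgfin _) (hgne x hx)
    have hDcoe : (fun x => ((D x).toNNReal : ℝ≥0∞)) =ᵐ[Pm G a v₀ v₁ e₀] D :=
      hDfin.mono fun x hx => ENNReal.coe_toNNReal hx.ne
    have hlint1 : ∫⁻ x, D x ∂Pm G a v₀ v₁ e₀ = 1 := by
      have h : ((Pm G a v₀ v₁ e₀).withDensity D) Set.univ = 1 := by
        rw [← hQ]; exact measure_univ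
      rwa [withDensity_apply _ MeasurableSet.univ, Measure.restrict_univ] at h
    have hint_d : Integrable (fun x => (D x).toReal) (Pm G a v₀ v₁ e₀) :=
      integrable_toReal_of_lintegral_ne_top hDmeas.aemeasurable
        (by rw [hlint1]; exact ENNReal.one_ne_top)
    have hlhs_eq : ∫ y, logRN (PiGamma G a φ v₀ v₁ e₀ γ) (Pm G a v₀ v₁ e₀) y
        ∂PiGamma G a φ v₀ v₁ e₀ γ
        = ∫ x, (D x).toNNReal • Real.log ((D x).toReal) ∂Pm G a v₀ v₁ e₀ := by
      calc ∫ y, logRN (PiGamma G a φ v₀ v₁ e₀ γ) (Pm G a v₀ v₁ e₀) y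
            ∂PiGamma G a φ v₀ v₁ e₀ γ
          = ∫ y, Real.log ((D y).toReal) ∂PiGamma G a φ v₀ v₁ e₀ γ := integral_congr_ae h1
        _ = ∫ y, Real.log ((D y).toReal)
            ∂((Pm G a v₀ v₁ e₀).withDensity fun x => ((D x).toNNReal : ℝ≥0∞)) := by
            rw [withDensity_congr_ae hDcoe, ← hQ]
        _ = ∫ x, (D x).toNNReal • Real.log ((D x).toReal) ∂Pm G a v₀ v₁ e₀ :=
            integral_withDensity_eq_integral_smul₀ hDmeas.ennreal_toNNReal.aemeasurable _
    have hint_lhs : Integrable (fun x => (D x).toNNReal • Real.log ((D x).toReal))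
        (Pm G a v₀ v₁ e₀) := by
      rw [← integrable_withDensity_iff_integrable_smul₀ hDmeas.ennreal_toNNReal.aemeasurable]
      rw [withDensity_congr_ae hDcoe, ← hQ]
      exact hint_log.congr h1
    have hmono : ∀ᵐ x ∂Pm G a v₀ v₁ e₀,
        (D x).toReal - 1 ≤ (D x).toNNReal • Real.log ((D x).toReal) := by
      refine Filter.Eventually.of_forall fun x => ?_
      have ht0 : 0 ≤ (D x).toReal := ENNReal.toReal_nonneg
      have hsmul : (D x).toNNReal • Real.log ((D x).toReal)
          = (D x).toReal * Real.log ((D x).toReal) := rfl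
      rw [hsmul]
      set t : ℝ := (D x).toReal
      rcases eq_or_lt_of_le ht0 with h | h
      · rw [← h]; norm_num
      · have hlog := Real.log_le_sub_one_of_pos (inv_pos.mpr h)
        rw [Real.log_inv] at hlog
        nlinarith [mul_le_mul_of_nonneg_left hlog h.le, mul_inv_cancel₀ h.ne']
    have hrhs : ∫ x, ((D x).toReal - 1) ∂Pm G a v₀ v₁ e₀ = 0 := by
      rw [integral_sub hint_d (integrable_const 1), integral_const, probReal_univ,
        integral_toReal hDmeas.aemeasurable hDfin, hlint1]
      simp
    have hnonneg : 0 ≤ ∫ y, logRN (PiGamma G a φ v₀ v₁ e₀ γ) (Pm G a v₀ v₁ e₀) y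
        ∂PiGamma G a φ v₀ v₁ e₀ γ := by
      rw [hlhs_eq]
      have hle := integral_mono_ae (hint_d.sub (integrable_const 1)) hint_lhs hmono
      calc (0:ℝ) = ∫ x, ((D x).toReal - 1) ∂Pm G a v₀ v₁ e₀ := hrhs.symm
        _ ≤ _ := hle
    exact ⟨hint_log, hnonneg, hint_f, heq⟩
end
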